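/- arXiv:2504.05405 — 8 statements merged into one kernel-verified Lean document; each statement's English description precedes it below -/
import Mathlib

section
/- Error propagation bound for Policy Search by Dynamic Programming under an approximate policy-optimization oracle (deterministic core of Theorem 2.1): Let M be a finite-horizon layered MDP with horizon H, Π a policy class, μ = (μ_1,…,μ_H) reset distributions, and π⋆ an optimal policy. Suppose C ≥ 0 satisfies d^{π⋆}_h(x) ≤ C·μ_h(x) for every h ∈ {1,…,H} and x ∈ X_h. Let ε_stat ≥ 0 and suppose per-layer selections π̂_H ∈ Π_H, …, π̂_1 ∈ Π_1 are such that for every h, π̂_h satisfies the ε_stat-approximate policy optimization condition (CB_h) with rollout π̂_{h+1:H}. Then V^{π⋆} − V^{π̂_{1:H}} ≤ H·C·ε_stat + C·Σ_{h=1}^{H} ε_PC(π̂_{h+1:H}). In particular, if ε_PC(π̂_{h+1:H}) = 0 for every h, then the composite policy π̂_{1:H} is (H·C·ε_stat)-optimal. -/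
open Finset

/-- A finite-horizon layered MDP: a finite state space partitioned into layers
`1, …, H`, a finite action set, layer-respecting transitions, mean rewards in `[0,1]`,
and an initial distribution supported on layer `1`. -/
structure LayeredMDP (X A : Type) [Fintype X] [Fintype A] (H : ℕ) where
  layer : X → ℕ
  layer_lb : ∀ x, 1 ≤ layer x
  layer_ub : ∀ x, layer x ≤ H
  layer_surj : ∀ h, 1 ≤ h → h ≤ H → ∃ x, layer x = h
  P : X → A → X → ℝ
  P_nonneg : ∀ x a x', 0 ≤ P x a x'
  P_sum_one : ∀ x a, layer x < H → ∑ x', P x a x' = 1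
  P_supp : ∀ x a x', layer x < H → P x a x' ≠ 0 → layer x' = layer x + 1
  R : X → A → ℝ
  R_nonneg : ∀ x a, 0 ≤ R x a
  R_le_one : ∀ x a, R x a ≤ 1
  d1 : X → ℝ
  d1_nonneg : ∀ x, 0 ≤ d1 x
  d1_sum_one : ∑ x, d1 x = 1
  d1_supp : ∀ x, d1 x ≠ 0 → layer x = 1

namespace LayeredMDP

variable {X A : Type} [Fintype X] [Fintype A] {H : ℕ}

/-- `n`-step value function of policy `π` (backward recursion). -/
noncomputable def Vsteps (M : LayeredMDP X A H) (π : X → A) : ℕ → X → ℝ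
  | 0, _ => 0
  | n + 1, x => M.R x (π x) + ∑ x', M.P x (π x) x' * Vsteps M π n x'

/-- The value `V^π(x)` of policy `π` from state `x` (at layer `M.layer x`). -/
noncomputable def V (M : LayeredMDP X A H) (π : X → A) (x : X) : ℝ :=
  Vsteps M π (H + 1 - M.layer x) x

/-- `Q^π(x,a)`: for `x` in layer `H` this is `R(x,a)`, and for earlier layers it is
`R(x,a) + E_{x' ∼ P(·|x,a)} V^π(x')`.  Note that `Q^π(x,a)` depends on `π` only
through its actions at layers after `M.layer x`, so it also serves as the
`Q`-function of a partial policy on layers `M.layer x + 1, …, H`. -/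
noncomputable def Q (M : LayeredMDP X A H) (π : X → A) (x : X) (a : A) : ℝ :=
  M.R x a + ∑ x', M.P x a x' * Vsteps M π (H - M.layer x) x'

/-- The value `V^π = E_{x ∼ d1} V^π(x)` of a policy. -/
noncomputable def value (M : LayeredMDP X A H) (π : X → A) : ℝ :=
  ∑ x, M.d1 x * M.V π x

noncomputable def occAux (M : LayeredMDP X A H) (π : X → A) : ℕ → X → ℝ
  | 0 => M.d1
  | n + 1 => fun x' => ∑ x, occAux M π n x * M.P x (π x) x'

/-- Occupancy measure `d^π_h` at layer `h ∈ {1, …, H}`. -/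
noncomputable def occ (M : LayeredMDP X A H) (π : X → A) (h : ℕ) : X → ℝ :=
  occAux M π (h - 1)

/-- `πs` is an optimal policy: it maximizes the value from every state simultaneously. -/
def IsOptimal (M : LayeredMDP X A H) (πs : X → A) : Prop :=
  ∀ (x : X) (π : X → A), M.V π x ≤ M.V πs x

/-- `μ = (μ_1, …, μ_H)` is a family of reset distributions: each `μ_h` is a
probability distribution supported on layer `h`. -/
def IsReset (M : LayeredMDP X A H) (μ : ℕ → X → ℝ) : Prop :=
  (∀ h x, 0 ≤ μ h x) ∧ (∀ h, 1 ≤ h → h ≤ H → ∑ x, μ h x = 1) ∧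
    (∀ h x, 1 ≤ h → h ≤ H → μ h x ≠ 0 → M.layer x = h)

/-- `σ` belongs to `Π_h`, the set of restrictions of members of `Π` to layer `h`. -/
def memLayer (M : LayeredMDP X A H) (Pi : Finset (X → A)) (h : ℕ) (σ : X → A) : Prop :=
  ∃ π ∈ Pi, ∀ x, M.layer x = h → σ x = π x

/-- `π` belongs to `Π̄`, the layerwise product closure of `Π`. -/
def inClosure (M : LayeredMDP X A H) (Pi : Finset (X → A)) (π : X → A) : Prop :=
  ∀ h, 1 ≤ h → h ≤ H → M.memLayer Pi h π

/-- Average policy completeness error of the rollout `ρ` (standing for a partial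
policy `π̂_{h+1:H}`) with respect to a distribution `ν` on layer `h`:
`ε_PC(ρ, ν) = min_{π ∈ Π} E_{x∼ν}[max_a Q^ρ(x,a) − Q^ρ(x, π(x))]`. -/
noncomputable def epsPC [Nonempty A] (M : LayeredMDP X A H) (Pi : Finset (X → A))
    (hPi : Pi.Nonempty) (ν : X → ℝ) (ρ : X → A) : ℝ :=
  Pi.inf' hPi fun π =>
    ∑ x, ν x * ((univ.sup' univ_nonempty fun a => M.Q ρ x a) - M.Q ρ x (π x))

/-- The `ε_stat`-approximate policy optimization condition `(CB_h)`: the selection `σ`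
is an `ε_stat`-approximate maximizer of `π ↦ E_{x∼ν}[Q^ρ(x, π(x))]` over `Π`,
where `ρ` is the rollout (partial policy `π̂_{h+1:H}`). -/
def CB (M : LayeredMDP X A H) (Pi : Finset (X → A)) (ν : X → ℝ) (εstat : ℝ)
    (ρ σ : X → A) : Prop :=
  ∀ π ∈ Pi, (∑ x, ν x * M.Q ρ x (π x)) - εstat ≤ ∑ x, ν x * M.Q ρ x (σ x)

/-- `ν` is admissible at layer `h`: it is a mixture of occupancy measures `d^π_h`
of policies `π ∈ Π̄`. -/
def Admissible [DecidableEq X] (M : LayeredMDP X A H) (Pi : Finset (X → A)) (h : ℕ)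
    (ν : X → ℝ) : Prop :=
  ∃ w : (X → A) → ℝ, (∀ π, 0 ≤ w π) ∧ (∑ π, w π = 1) ∧
    (∀ π, w π ≠ 0 → M.inClosure Pi π) ∧ (∀ x, ν x = ∑ π, w π * M.occ π h x)

lemma aux_V_eq_Q (M : LayeredMDP X A H) (π : X → A) (x : X) :
    M.V π x = M.Q π x (π x) := by
  have h := M.layer_ub x
  have h2 : H + 1 - M.layer x = (H - M.layer x) + 1 := by omega
  rw [V, h2, Vsteps, Q]

lemma aux_Q_eq (M : LayeredMDP X A H) (π : X → A) (x : X) (a : A)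
    (hx : M.layer x < H) :
    M.Q π x a = M.R x a + ∑ x', M.P x a x' * M.V π x' := by
  unfold Q
  congr 1
  apply Finset.sum_congr rfl
  intro x' _
  by_cases hp : M.P x a x' = 0
  · simp [hp]
  · have hl := M.P_supp x a x' hx hp
    have h2 : H + 1 - M.layer x' = H - M.layer x := by omega
    rw [V, h2]

lemma aux_Q_last (M : LayeredMDP X A H) (π : X → A) (x : X) (a : A)
    (hx : M.layer x = H) : M.Q π x a = M.R x a := by
  unfold Q
  rw [hx, Nat.sub_self]
  simp [Vsteps]

lemma aux_occAux_nonneg (M : LayeredMDP X A H) (π : X → A) :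
    ∀ n x, 0 ≤ M.occAux π n x := by
  intro n
  induction n with
  | zero => exact M.d1_nonneg
  | succ n ih =>
    intro x
    simp only [occAux]
    exact Finset.sum_nonneg fun y _ => mul_nonneg (ih y) (M.P_nonneg y (π y) x)

lemma aux_occAux_supp (M : LayeredMDP X A H) (π : X → A) :
    ∀ n, n + 1 ≤ H → ∀ x, M.occAux π n x ≠ 0 → M.layer x = n + 1 := by
  intro n
  induction n with
  | zero => intro _ x hx; exact M.d1_supp x hx
  | succ n ih =>
    intro hn x' hx'
    simp only [occAux] at hx'
    obtain ⟨x, -, hx⟩ := Finset.exists_ne_zero_of_sum_ne_zero hx'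
    rw [mul_ne_zero_iff] at hx
    have hlx : M.layer x = n + 1 := ih (by omega) x hx.1
    have := M.P_supp x (π x) x' (by omega) hx.2
    omega

lemma aux_occAux_sum (M : LayeredMDP X A H) (π : X → A) :
    ∀ n, n + 1 ≤ H → ∑ x, M.occAux π n x = 1 := by
  intro n
  induction n with
  | zero => intro _; exact M.d1_sum_one
  | succ n ih =>
    intro hn
    simp only [occAux]
    rw [Finset.sum_comm]
    have h1 : ∀ x ∈ (Finset.univ : Finset X),
        ∑ x', M.occAux π n x * M.P x (π x) x' = M.occAux π n x := by
      intro x _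
      by_cases h0 : M.occAux π n x = 0
      · simp [h0]
      · rw [← Finset.mul_sum, M.P_sum_one x (π x)
          (by rw [M.aux_occAux_supp π n (by omega) x h0]; omega), mul_one]
    rw [Finset.sum_congr rfl h1, ih (by omega)]

/-- One-step expansion of `∑_x d_n(x) Q^{π̂}(x, π(x))`. -/
lemma aux_expand (M : LayeredMDP X A H) (π πh : X → A) (n : ℕ) (hn : n + 1 < H) :
    ∑ x, M.occAux π n x * M.Q πh x (π x)
      = (∑ x, M.occAux π n x * M.R x (π x))
        + ∑ x', M.occAux π (n + 1) x' * M.V πh x' := by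
  have step1 : ∀ x ∈ (Finset.univ : Finset X),
      M.occAux π n x * M.Q πh x (π x)
        = M.occAux π n x * M.R x (π x)
          + ∑ x', M.occAux π n x * (M.P x (π x) x' * M.V πh x') := by
    intro x _
    by_cases h0 : M.occAux π n x = 0
    · simp [h0]
    · have hl : M.layer x < H := by
        rw [M.aux_occAux_supp π n (by omega) x h0]; omega
      rw [M.aux_Q_eq πh x (π x) hl, mul_add, Finset.mul_sum]
  rw [Finset.sum_congr rfl step1, Finset.sum_add_distrib]
  congr 1
  rw [Finset.sum_comm]
  apply Finset.sum_congr rfl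
  intro x' _
  simp only [occAux]
  rw [Finset.sum_mul]
  exact Finset.sum_congr rfl fun x _ => by ring

/-- At the last layer the `Q`-function is just the reward. -/
lemma aux_last (M : LayeredMDP X A H) (π πh : X → A) (hH : 1 ≤ H) (f : X → A) :
    ∑ x, M.occAux π (H - 1) x * M.Q πh x (f x)
      = ∑ x, M.occAux π (H - 1) x * M.R x (f x) := by
  apply Finset.sum_congr rfl
  intro x _
  by_cases h0 : M.occAux π (H - 1) x = 0
  · simp [h0]
  · rw [M.aux_Q_last πh x (f x)
      (by have := M.aux_occAux_supp π (H - 1) (by omega) x h0; omega)]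

lemma aux_tele (M : LayeredMDP X A H) (π πh : X → A) (hH : 1 ≤ H) :
    ∀ d, d < H → ∑ n ∈ Finset.Ico (H - 1 - d) H,
        (∑ x, M.occAux π n x * (M.Q πh x (π x) - M.Q πh x (πh x)))
      = (∑ x, M.occAux π (H - 1 - d) x * M.V π x)
        - ∑ x, M.occAux π (H - 1 - d) x * M.V πh x := by
  have base : ∑ n ∈ Finset.Ico (H - 1) H,
        (∑ x, M.occAux π n x * (M.Q πh x (π x) - M.Q πh x (πh x)))
      = (∑ x, M.occAux π (H - 1) x * M.V π x)
        - ∑ x, M.occAux π (H - 1) x * M.V πh x := by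
    have hIco : Finset.Ico (H - 1) H = {H - 1} := by
      have : H = (H - 1) + 1 := by omega
      rw [this, Nat.add_sub_cancel, Nat.Ico_succ_singleton]
    rw [hIco, Finset.sum_singleton]
    have e1 : ∀ x ∈ (Finset.univ : Finset X),
        M.occAux π (H - 1) x * (M.Q πh x (π x) - M.Q πh x (πh x))
          = M.occAux π (H - 1) x * M.Q πh x (π x)
            - M.occAux π (H - 1) x * M.Q πh x (πh x) := fun x _ => by ring
    rw [Finset.sum_congr rfl e1, Finset.sum_sub_distrib]
    have e2 : ∀ x ∈ (Finset.univ : Finset X),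
        M.occAux π (H - 1) x * M.V π x
          = M.occAux π (H - 1) x * M.Q π x (π x) := fun x _ => by
      rw [M.aux_V_eq_Q π x]
    have e3 : ∀ x ∈ (Finset.univ : Finset X),
        M.occAux π (H - 1) x * M.V πh x
          = M.occAux π (H - 1) x * M.Q πh x (πh x) := fun x _ => by
      rw [M.aux_V_eq_Q πh x]
    rw [Finset.sum_congr rfl e2, Finset.sum_congr rfl e3,
      M.aux_last π πh hH π, M.aux_last π π hH π]
  intro d
  induction d with
  | zero => intro _; simpa using base
  | succ d ih =>
    intro hd
    have hk : H - 1 - (d + 1) + 1 = H - 1 - d := by omega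
    set k := H - 1 - (d + 1) with hkdef
    have hkH : k < H := by omega
    rw [Finset.sum_eq_sum_Ico_succ_bot hkH, hk, ih (by omega)]
    -- now reduce to the one-step identity at k
    have hk1 : k + 1 < H := by omega
    have e1 : ∀ x ∈ (Finset.univ : Finset X),
        M.occAux π k x * (M.Q πh x (π x) - M.Q πh x (πh x))
          = M.occAux π k x * M.Q πh x (π x)
            - M.occAux π k x * M.Q πh x (πh x) := fun x _ => by ring
    have e3 : ∀ x ∈ (Finset.univ : Finset X),
        M.occAux π k x * M.Q πh x (πh x)
          = M.occAux π k x * M.V πh x := fun x _ => by rw [M.aux_V_eq_Q πh x]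
    have e4 : ∀ x ∈ (Finset.univ : Finset X),
        M.occAux π k x * M.V π x
          = M.occAux π k x * M.Q π x (π x) := fun x _ => by rw [M.aux_V_eq_Q π x]
    have hGrec : ∑ x, M.occAux π k x * M.V π x
        = (∑ x, M.occAux π k x * M.R x (π x))
          + ∑ x', M.occAux π (k + 1) x' * M.V π x' := by
      rw [Finset.sum_congr rfl e4, M.aux_expand π π k hk1]
    have hDrec : ∑ x, M.occAux π k x * (M.Q πh x (π x) - M.Q πh x (πh x))
        = ((∑ x, M.occAux π k x * M.R x (π x))
            + ∑ x', M.occAux π (k + 1) x' * M.V πh x')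
          - ∑ x, M.occAux π k x * M.V πh x := by
      rw [Finset.sum_congr rfl e1, Finset.sum_sub_distrib,
        M.aux_expand π πh k hk1, Finset.sum_congr rfl e3]
    rw [← hk, hDrec, hGrec]
    ring

/-- Performance difference lemma. -/
lemma aux_pdl (M : LayeredMDP X A H) (π πh : X → A) (hH : 1 ≤ H) :
    M.value π - M.value πh =
      ∑ n ∈ Finset.range H,
        (∑ x, M.occAux π n x * (M.Q πh x (π x) - M.Q πh x (πh x))) := by
  have h := M.aux_tele π πh hH (H - 1) (by omega)
  have h0 : H - 1 - (H - 1) = 0 := by omega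
  rw [h0] at h
  rw [Finset.range_eq_Ico, h]
  have hocc0 : M.occAux π 0 = M.d1 := rfl
  rw [hocc0]
  rfl

end LayeredMDP

open LayeredMDP in
/-- Error propagation bound for Policy Search by Dynamic Programming
under an approximate policy-optimization oracle (deterministic core of Theorem 2.1). -/
theorem psdp_error_propagation
    {X A : Type} [Fintype X] [Fintype A] [Nonempty A]
    {H : ℕ} (M : LayeredMDP X A H)
    (Pi : Finset (X → A)) (hPi : Pi.Nonempty)
    (μ : ℕ → X → ℝ) (hμ : M.IsReset μ)
    (πs : X → A) (hopt : M.IsOptimal πs)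
    (C : ℝ) (hC : 0 ≤ C)
    (hconc : ∀ h, 1 ≤ h → h ≤ H → ∀ x, M.layer x = h → M.occ πs h x ≤ C * μ h x)
    (εstat : ℝ) (hεstat : 0 ≤ εstat)
    (pick : ℕ → X → A)
    (hmem : ∀ h, 1 ≤ h → h ≤ H → M.memLayer Pi h (pick h))
    (hCB : ∀ h, 1 ≤ h → h ≤ H →
      M.CB Pi (μ h) εstat (fun x => pick (M.layer x) x) (pick h)) :
    (M.value πs - M.value (fun x => pick (M.layer x) x) ≤
      H * C * εstat + C * ∑ h ∈ Finset.Icc 1 H,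
        M.epsPC Pi hPi (μ h) (fun x => pick (M.layer x) x)) ∧
    ((∀ h ∈ Finset.Icc 1 H,
        M.epsPC Pi hPi (μ h) (fun x => pick (M.layer x) x) = 0) →
      M.value πs - M.value (fun x => pick (M.layer x) x) ≤ H * C * εstat) := by
  rcases Nat.eq_zero_or_pos H with hH0 | hH
  · exfalso
    have hempty : IsEmpty X :=
      ⟨fun x => by have := M.layer_lb x; have := M.layer_ub x; omega⟩
    have h1 := M.d1_sum_one
    rw [Finset.univ_eq_empty, Finset.sum_empty] at h1
    norm_num at h1
  set πh : X → A := fun x => pick (M.layer x) x with hπh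
  have key : ∀ h ∈ Finset.Icc 1 H,
      (∑ x, M.occAux πs (h - 1) x * (M.Q πh x (πs x) - M.Q πh x (πh x)))
        ≤ C * (εstat + M.epsPC Pi hPi (μ h) πh) := by
    intro h hh
    rw [Finset.mem_Icc] at hh
    obtain ⟨hh1, hh2⟩ := hh
    -- the inf'-achieving policy
    obtain ⟨π0, hπ0mem, hπ0⟩ := Finset.exists_mem_eq_inf' hPi
      (fun π => ∑ x, μ h x * ((Finset.univ.sup' Finset.univ_nonempty
        fun a => M.Q πh x a) - M.Q πh x (π x)))
    have hsupp : ∀ x, M.occAux πs (h - 1) x ≠ 0 → M.layer x = h := by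
      intro x hx
      have := M.aux_occAux_supp πs (h - 1) (by omega) x hx
      omega
    have hnn : ∀ x, 0 ≤ (Finset.univ.sup' Finset.univ_nonempty
        fun a => M.Q πh x a) - M.Q πh x (πh x) := by
      intro x
      have := Finset.le_sup' (fun a => M.Q πh x a) (Finset.mem_univ (πh x))
      linarith
    have step1 : (∑ x, M.occAux πs (h - 1) x * (M.Q πh x (πs x) - M.Q πh x (πh x)))
        ≤ ∑ x, (C * μ h x) * ((Finset.univ.sup' Finset.univ_nonempty
            fun a => M.Q πh x a) - M.Q πh x (πh x)) := by
      apply Finset.sum_le_sum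
      intro x _
      by_cases h0 : M.occAux πs (h - 1) x = 0
      · rw [h0, zero_mul]
        exact mul_nonneg (mul_nonneg hC (hμ.1 h x)) (hnn x)
      · have hle : M.Q πh x (πs x) - M.Q πh x (πh x)
            ≤ (Finset.univ.sup' Finset.univ_nonempty fun a => M.Q πh x a)
              - M.Q πh x (πh x) := by
          have := Finset.le_sup' (fun a => M.Q πh x a) (Finset.mem_univ (πs x))
          linarith
        calc M.occAux πs (h - 1) x * (M.Q πh x (πs x) - M.Q πh x (πh x))
            ≤ M.occAux πs (h - 1) x * ((Finset.univ.sup' Finset.univ_nonempty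
                fun a => M.Q πh x a) - M.Q πh x (πh x)) :=
              mul_le_mul_of_nonneg_left hle (M.aux_occAux_nonneg πs (h - 1) x)
          _ ≤ (C * μ h x) * ((Finset.univ.sup' Finset.univ_nonempty
                fun a => M.Q πh x a) - M.Q πh x (πh x)) := by
              apply mul_le_mul_of_nonneg_right _ (hnn x)
              exact hconc h hh1 hh2 x (hsupp x h0)
    -- rewrite Q at πh as Q at pick h on the support of μ h
    have hsame : (∑ x, μ h x * M.Q πh x (πh x))
        = ∑ x, μ h x * M.Q πh x (pick h x) := by
      apply Finset.sum_congr rfl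
      intro x _
      by_cases h0 : μ h x = 0
      · rw [h0, zero_mul, zero_mul]
      · have hl := hμ.2.2 h x hh1 hh2 h0
        have : πh x = pick h x := by rw [hπh]; simp [hl]
        rw [this]
    have hcb := hCB h hh1 hh2 π0 hπ0mem
    have step2 : (∑ x, μ h x * ((Finset.univ.sup' Finset.univ_nonempty
          fun a => M.Q πh x a) - M.Q πh x (πh x)))
        ≤ εstat + M.epsPC Pi hPi (μ h) πh := by
      have hsplit : (∑ x, μ h x * ((Finset.univ.sup' Finset.univ_nonempty
            fun a => M.Q πh x a) - M.Q πh x (πh x)))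
          = (∑ x, μ h x * ((Finset.univ.sup' Finset.univ_nonempty
              fun a => M.Q πh x a) - M.Q πh x (π0 x)))
            + ((∑ x, μ h x * M.Q πh x (π0 x)) - ∑ x, μ h x * M.Q πh x (πh x)) := by
        rw [← Finset.sum_sub_distrib, ← Finset.sum_add_distrib]
        apply Finset.sum_congr rfl
        intro x _
        ring
      rw [hsplit, hsame]
      have heps : M.epsPC Pi hPi (μ h) πh
          = ∑ x, μ h x * ((Finset.univ.sup' Finset.univ_nonempty
              fun a => M.Q πh x a) - M.Q πh x (π0 x)) := hπ0
      have h2 : (∑ x, μ h x * M.Q πh x (π0 x)) - (∑ x, μ h x * M.Q πh x (pick h x))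
          ≤ εstat := by
        have := hcb
        linarith
      linarith
    calc (∑ x, M.occAux πs (h - 1) x * (M.Q πh x (πs x) - M.Q πh x (πh x)))
        ≤ ∑ x, (C * μ h x) * ((Finset.univ.sup' Finset.univ_nonempty
            fun a => M.Q πh x a) - M.Q πh x (πh x)) := step1
      _ = C * ∑ x, μ h x * ((Finset.univ.sup' Finset.univ_nonempty
            fun a => M.Q πh x a) - M.Q πh x (πh x)) := by
          rw [Finset.mul_sum]; exact Finset.sum_congr rfl fun x _ => by ring
      _ ≤ C * (εstat + M.epsPC Pi hPi (μ h) πh) :=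
          mul_le_mul_of_nonneg_left step2 hC
  have pdl := M.aux_pdl πs πh hH
  have reindex : (∑ n ∈ Finset.range H,
        (∑ x, M.occAux πs n x * (M.Q πh x (πs x) - M.Q πh x (πh x))))
      = ∑ h ∈ Finset.Icc 1 H,
        (∑ x, M.occAux πs (h - 1) x * (M.Q πh x (πs x) - M.Q πh x (πh x))) := by
    apply Finset.sum_nbij' (fun n => n + 1) (fun h => h - 1)
    · intro n hn; rw [Finset.mem_range] at hn; rw [Finset.mem_Icc]; omega
    · intro h hh; rw [Finset.mem_Icc] at hh; rw [Finset.mem_range]; omega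
    · intro n hn; omega
    · intro h hh; rw [Finset.mem_Icc] at hh; omega
    · intro n hn; rw [Nat.add_sub_cancel]
  have main : M.value πs - M.value πh ≤
      H * C * εstat + C * ∑ h ∈ Finset.Icc 1 H, M.epsPC Pi hPi (μ h) πh := by
    rw [pdl, reindex]
    calc (∑ h ∈ Finset.Icc 1 H,
          (∑ x, M.occAux πs (h - 1) x * (M.Q πh x (πs x) - M.Q πh x (πh x))))
        ≤ ∑ h ∈ Finset.Icc 1 H, C * (εstat + M.epsPC Pi hPi (μ h) πh) :=
          Finset.sum_le_sum key
      _ = H * C * εstat + C * ∑ h ∈ Finset.Icc 1 H, M.epsPC Pi hPi (μ h) πh := by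
          rw [← Finset.mul_sum, Finset.sum_add_distrib, Finset.sum_const,
            Nat.card_Icc]
          push_cast
          ring
  refine ⟨main, fun hzero => ?_⟩
  have hz : (∑ h ∈ Finset.Icc 1 H, M.epsPC Pi hPi (μ h) πh) = 0 :=
    Finset.sum_eq_zero hzero
  calc M.value πs - M.value πh
      ≤ H * C * εstat + C * ∑ h ∈ Finset.Icc 1 H, M.epsPC Pi hPi (μ h) πh := main
    _ = H * C * εstat := by rw [hz, mul_zero, add_zero]
end

section
/- PSDP under policy realizability and pushforward concentrability (deterministic core of the theorem 'PSDP with realizability + pushforward concentrability'): Let M be a finite-horizon layered MDP with horizon H and Π a policy class containing an optimal policy π⋆. Suppose μ satisfies pushforward concentrability with parameter C_push ≥ 1, and additionally d_1(x) ≤ C_push·μ_1(x) for all x ∈ X_1. Let ε_stat ≥ 0 and suppose per-layer selections π̂_h ∈ Π_h (h = H, …, 1) each satisfy the ε_stat-approximate policy optimization condition (CB_h) with rollout π̂_{h+1:H}. Then V^{π⋆} − V^{π̂_{1:H}} ≤ H²·(2·C_push)^{H+1}·ε_stat. -/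
open Finset

section Aux

open LayeredMDP

variable {X A : Type} [Fintype X] [Fintype A] {H : ℕ}

private lemma vsteps_agree (M : LayeredMDP X A H) (π π' : X → A) :
    ∀ n x, n = H + 1 - M.layer x →
      (∀ y, M.layer x ≤ M.layer y → π y = π' y) →
      M.Vsteps π n x = M.Vsteps π' n x := by
  intro n
  induction n with
  | zero =>
    intro x hn _
    have := M.layer_ub x
    omega
  | succ m ih =>
    intro x hn hag
    have hx : π x = π' x := hag x le_rfl
    simp only [LayeredMDP.Vsteps, hx]
    congr 1
    refine Finset.sum_congr rfl fun x' _ => ?_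
    by_cases hP : M.P x (π' x) x' = 0
    · simp [hP]
    · rcases lt_or_eq_of_le (M.layer_ub x) with hlt | heq
      · have hl' := M.P_supp x (π' x) x' hlt hP
        have hlb := M.layer_lb x
        rw [ih x' (by omega) (fun y hy => hag y (by omega))]
      · have hm : m = 0 := by omega
        subst hm
        simp [LayeredMDP.Vsteps]

private lemma q_agree (M : LayeredMDP X A H) (π π' : X → A) (x : X) (a : A)
    (hag : ∀ y, M.layer x + 1 ≤ M.layer y → π y = π' y) :
    M.Q π x a = M.Q π' x a := by
  unfold LayeredMDP.Q
  congr 1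
  refine Finset.sum_congr rfl fun x' _ => ?_
  by_cases hP : M.P x a x' = 0
  · simp [hP]
  · rcases lt_or_eq_of_le (M.layer_ub x) with hlt | heq
    · have hl' := M.P_supp x a x' hlt hP
      rw [vsteps_agree M π π' (H - M.layer x) x' (by omega) (fun y hy => hag y (by omega))]
    · have h0 : H - M.layer x = 0 := by omega
      rw [h0]
      simp [LayeredMDP.Vsteps]

private lemma v_eq_q (M : LayeredMDP X A H) (π : X → A) (x : X) :
    M.V π x = M.Q π x (π x) := by
  unfold LayeredMDP.V LayeredMDP.Q
  have h : H + 1 - M.layer x = (H - M.layer x) + 1 := by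
    have := M.layer_ub x; omega
  rw [h]
  rfl

private lemma q_expand (M : LayeredMDP X A H) (π : X → A) (x : X) (a : A)
    (hx : M.layer x < H) :
    M.Q π x a = M.R x a + ∑ x', M.P x a x' * M.V π x' := by
  unfold LayeredMDP.Q LayeredMDP.V
  congr 1
  refine Finset.sum_congr rfl fun x' _ => ?_
  by_cases hP : M.P x a x' = 0
  · simp [hP]
  · have hl' := M.P_supp x a x' hx hP
    have h : H - M.layer x = H + 1 - M.layer x' := by omega
    rw [h]

private lemma q_top (M : LayeredMDP X A H) (π : X → A) (x : X) (a : A)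
    (hx : M.layer x = H) : M.Q π x a = M.R x a := by
  unfold LayeredMDP.Q
  rw [hx, Nat.sub_self]
  simp [LayeredMDP.Vsteps]

private lemma bellman_opt (M : LayeredMDP X A H) (πs : X → A)
    (hopt : M.IsOptimal πs) (x : X) (a : A) :
    M.Q πs x a ≤ M.V πs x := by
  classical
  have h1 : M.V (Function.update πs x a) x ≤ M.V πs x := hopt x _
  have h2 : M.V (Function.update πs x a) x = M.Q πs x a := by
    rw [v_eq_q, Function.update_self]
    exact q_agree M _ πs x a fun y hy =>
      Function.update_of_ne (fun h => by subst h; omega) a πs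
  linarith

private lemma q_mono (M : LayeredMDP X A H) (π πs : X → A)
    (hopt : M.IsOptimal πs) (x : X) (a : A) :
    M.Q π x a ≤ M.Q πs x a := by
  rcases lt_or_eq_of_le (M.layer_ub x) with hlt | heq
  · rw [q_expand M π x a hlt, q_expand M πs x a hlt]
    exact add_le_add (le_refl _) (Finset.sum_le_sum fun x' _ =>
      mul_le_mul_of_nonneg_left (hopt x' π) (M.P_nonneg x a x'))
  · rw [q_top M π x a heq, q_top M πs x a heq]

private lemma step_identity (M : LayeredMDP X A H) (π πs : X → A) (x : X)
    (hx : M.layer x < H) :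
    M.V πs x - M.V π x = (M.Q π x (πs x) - M.Q π x (π x)) +
      ∑ x', M.P x (πs x) x' * (M.V πs x' - M.V π x') := by
  have hs : ∑ x', M.P x (πs x) x' * (M.V πs x' - M.V π x')
      = (∑ x', M.P x (πs x) x' * M.V πs x') - ∑ x', M.P x (πs x) x' * M.V π x' := by
    rw [← Finset.sum_sub_distrib]
    exact Finset.sum_congr rfl fun _ _ => mul_sub _ _ _
  rw [hs, v_eq_q M πs x, v_eq_q M π x, q_expand M πs x (πs x) hx,
    q_expand M π x (πs x) hx, q_expand M π x (π x) hx]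
  ring

end Aux
section Aux2

open LayeredMDP Finset

variable {X A : Type} [Fintype X] [Fintype A] {H : ℕ}

private noncomputable def gap [Nonempty A] (M : LayeredMDP X A H) (ρ : X → A) (x : X) : ℝ :=
  (univ.sup' univ_nonempty fun a => M.Q ρ x a) - M.Q ρ x (ρ x)

private noncomputable def del [Nonempty A] (M : LayeredMDP X A H) (μ : ℕ → X → ℝ)
    (ρ : X → A) (h : ℕ) : ℝ :=
  ∑ x, μ h x * gap M ρ x

private lemma gap_nonneg [Nonempty A] (M : LayeredMDP X A H) (ρ : X → A) (x : X) :
    0 ≤ gap M ρ x :=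
  sub_nonneg.mpr (Finset.le_sup' _ (Finset.mem_univ (ρ x)))

private lemma le_gap [Nonempty A] (M : LayeredMDP X A H) (ρ : X → A) (x : X) (a : A) :
    M.Q ρ x a - M.Q ρ x (ρ x) ≤ gap M ρ x :=
  sub_le_sub_right (Finset.le_sup' _ (Finset.mem_univ a)) _

private lemma first_bound [Nonempty A] (M : LayeredMDP X A H) (μ : ℕ → X → ℝ)
    (hμnn : ∀ h x, 0 ≤ μ h x) (ρ πs : X → A) (Cpush : ℝ) (hC0 : 0 ≤ Cpush) (h : ℕ)
    (d : X → ℝ) (hdnn : ∀ x, 0 ≤ d x) (hdle : ∀ x, d x ≤ Cpush * μ h x) :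
    ∑ x, d x * (M.Q ρ x (πs x) - M.Q ρ x (ρ x)) ≤ Cpush * del M μ ρ h := by
  calc ∑ x, d x * (M.Q ρ x (πs x) - M.Q ρ x (ρ x))
      ≤ ∑ x, Cpush * μ h x * gap M ρ x := by
        refine Finset.sum_le_sum fun x _ => ?_
        calc d x * (M.Q ρ x (πs x) - M.Q ρ x (ρ x)) ≤ d x * gap M ρ x :=
              mul_le_mul_of_nonneg_left (le_gap M ρ x (πs x)) (hdnn x)
          _ ≤ Cpush * μ h x * gap M ρ x :=
              mul_le_mul_of_nonneg_right (hdle x) (gap_nonneg M ρ x)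
    _ = Cpush * del M μ ρ h := by
        simp only [del, Finset.mul_sum]
        exact Finset.sum_congr rfl fun x _ => mul_assoc _ _ _

private lemma pushed [Nonempty A] (M : LayeredMDP X A H) (μ : ℕ → X → ℝ)
    (hμnn : ∀ h x, 0 ≤ μ h x) (Cpush : ℝ) (hC0 : 0 ≤ Cpush)
    (hpush : ∀ h, 2 ≤ h → h ≤ H → ∀ x a x', M.layer x = h - 1 → M.layer x' = h →
      M.P x a x' ≤ Cpush * μ h x')
    (πs : X → A) (h : ℕ) (hh : h < H) (d : X → ℝ)
    (hdnn : ∀ x, 0 ≤ d x) (hdsupp : ∀ x, d x ≠ 0 → M.layer x = h)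
    (hdsum : ∑ x, d x ≤ 1) :
    (∀ x', 0 ≤ ∑ x, d x * M.P x (πs x) x') ∧
    (∀ x', (∑ x, d x * M.P x (πs x) x') ≠ 0 → M.layer x' = h + 1) ∧
    (∑ x', ∑ x, d x * M.P x (πs x) x') ≤ 1 ∧
    (∀ x', (∑ x, d x * M.P x (πs x) x') ≤ Cpush * μ (h + 1) x') := by
  have hlayer : ∀ x, d x ≠ 0 → M.layer x < H := fun x hdx => by
    rw [hdsupp x hdx]; exact hh
  have hzero : ∀ x', M.layer x' ≠ h + 1 → (∑ x, d x * M.P x (πs x) x') = 0 := by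
    intro x' hx'
    refine Finset.sum_eq_zero fun x _ => ?_
    by_cases hdx : d x = 0
    · rw [hdx, zero_mul]
    · by_cases hP : M.P x (πs x) x' = 0
      · rw [hP, mul_zero]
      · exfalso
        have h1 := M.P_supp x (πs x) x' (hlayer x hdx) hP
        have h2 := hdsupp x hdx
        omega
  refine ⟨fun x' => Finset.sum_nonneg fun x _ => mul_nonneg (hdnn x) (M.P_nonneg _ _ _),
    fun x' hx' => by by_contra hc; exact hx' (hzero x' hc), ?_, ?_⟩
  · have heq : (∑ x', ∑ x, d x * M.P x (πs x) x') = ∑ x, d x := by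
      rw [Finset.sum_comm]
      refine Finset.sum_congr rfl fun x _ => ?_
      by_cases hdx : d x = 0
      · simp [hdx]
      · rw [← Finset.mul_sum, M.P_sum_one x (πs x) (hlayer x hdx), mul_one]
    rw [heq]; exact hdsum
  · intro x'
    by_cases hx' : M.layer x' = h + 1
    · have s1 : (∑ x, d x * M.P x (πs x) x') ≤ ∑ x, d x * (Cpush * μ (h + 1) x') := by
        refine Finset.sum_le_sum fun x _ => ?_
        by_cases hdx : d x = 0
        · rw [hdx, zero_mul, zero_mul]
        · exact mul_le_mul_of_nonneg_left
            (hpush (h + 1) (by have := M.layer_lb x; have := hdsupp x hdx; omega)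
              (by omega) x (πs x) x' (by rw [hdsupp x hdx]; omega) hx') (hdnn x)
      have s2 : (∑ x, d x * (Cpush * μ (h + 1) x')) = (∑ x, d x) * (Cpush * μ (h + 1) x') :=
        (Finset.sum_mul _ _ _).symm
      have s3 : (∑ x, d x) * (Cpush * μ (h + 1) x') ≤ 1 * (Cpush * μ (h + 1) x') :=
        mul_le_mul_of_nonneg_right hdsum (mul_nonneg hC0 (hμnn _ _))
      rw [s2] at s1
      rw [one_mul] at s3
      exact le_trans s1 s3
    · rw [hzero x' hx']
      exact mul_nonneg hC0 (hμnn _ _)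

private lemma key_bound [Nonempty A] (M : LayeredMDP X A H) (μ : ℕ → X → ℝ)
    (hμnn : ∀ h x, 0 ≤ μ h x) (πs ρ : X → A) (Cpush : ℝ) (hC0 : 0 ≤ Cpush)
    (hpush : ∀ h, 2 ≤ h → h ≤ H → ∀ x a x', M.layer x = h - 1 → M.layer x' = h →
      M.P x a x' ≤ Cpush * μ h x') :
    ∀ n h (d : X → ℝ), h = H + 1 - n → 1 ≤ h → h ≤ H →
      (∀ x, 0 ≤ d x) → (∀ x, d x ≠ 0 → M.layer x = h) → (∑ x, d x) ≤ 1 →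
      (∀ x, d x ≤ Cpush * μ h x) →
      ∑ x, d x * (M.V πs x - M.V ρ x) ≤ Cpush * ∑ k ∈ Finset.Icc h H, del M μ ρ k := by
  intro n
  induction n with
  | zero => intro h d hh h1 hhH _ _ _ _; omega
  | succ m ih =>
    intro h d hh h1 hhH hdnn hdsupp hdsum hdle
    rcases eq_or_lt_of_le hhH with htop | hlt
    · have hpt : ∀ x, d x * (M.V πs x - M.V ρ x) ≤ Cpush * μ h x * gap M ρ x := by
        intro x
        by_cases hdx : d x = 0
        · rw [hdx, zero_mul]
          exact mul_nonneg (mul_nonneg hC0 (hμnn h x)) (gap_nonneg M ρ x)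
        · have hlx : M.layer x = H := by rw [hdsupp x hdx]; exact htop
          have hid : M.V πs x - M.V ρ x = M.Q ρ x (πs x) - M.Q ρ x (ρ x) := by
            rw [v_eq_q M πs x, v_eq_q M ρ x, q_top M πs x (πs x) hlx,
              q_top M ρ x (πs x) hlx, q_top M ρ x (ρ x) hlx]
          rw [hid]
          calc d x * (M.Q ρ x (πs x) - M.Q ρ x (ρ x)) ≤ d x * gap M ρ x :=
                mul_le_mul_of_nonneg_left (le_gap M ρ x (πs x)) (hdnn x)
            _ ≤ Cpush * μ h x * gap M ρ x :=
                mul_le_mul_of_nonneg_right (hdle x) (gap_nonneg M ρ x)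
      calc ∑ x, d x * (M.V πs x - M.V ρ x) ≤ ∑ x, Cpush * μ h x * gap M ρ x :=
            Finset.sum_le_sum fun x _ => hpt x
        _ = Cpush * del M μ ρ h := by
            simp only [del, Finset.mul_sum]
            exact Finset.sum_congr rfl fun x _ => mul_assoc _ _ _
        _ = Cpush * ∑ k ∈ Finset.Icc h H, del M μ ρ k := by
            rw [htop, Finset.Icc_self, Finset.sum_singleton]
    · obtain ⟨hd'nn, hd'supp, hd'sum, hd'le⟩ :=
        pushed M μ hμnn Cpush hC0 hpush πs h hlt d hdnn hdsupp hdsum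
      have hlayer : ∀ x, d x ≠ 0 → M.layer x < H := fun x hdx => by
        rw [hdsupp x hdx]; exact hlt
      have hdecomp : ∑ x, d x * (M.V πs x - M.V ρ x)
          = (∑ x, d x * (M.Q ρ x (πs x) - M.Q ρ x (ρ x)))
            + ∑ x', (∑ x, d x * M.P x (πs x) x') * (M.V πs x' - M.V ρ x') := by
        have h1' : ∀ x, d x * (M.V πs x - M.V ρ x)
            = d x * (M.Q ρ x (πs x) - M.Q ρ x (ρ x))
              + ∑ x', d x * (M.P x (πs x) x' * (M.V πs x' - M.V ρ x')) := by
          intro x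
          by_cases hdx : d x = 0
          · simp [hdx]
          · rw [← Finset.mul_sum, ← mul_add, ← step_identity M ρ πs x (hlayer x hdx)]
        rw [Finset.sum_congr rfl fun x _ => h1' x, Finset.sum_add_distrib]
        congr 1
        rw [Finset.sum_comm]
        refine Finset.sum_congr rfl fun x' _ => ?_
        rw [Finset.sum_mul]
        exact Finset.sum_congr rfl fun x _ => (mul_assoc _ _ _).symm
      have ihm := ih (h + 1) (fun x' => ∑ x, d x * M.P x (πs x) x')
        (by omega) (by omega) (by omega) hd'nn hd'supp hd'sum hd'le
      have hf := first_bound M μ hμnn ρ πs Cpush hC0 h d hdnn hdle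
      have hsplit : ∑ k ∈ Finset.Icc h H, del M μ ρ k
          = del M μ ρ h + ∑ k ∈ Finset.Icc (h + 1) H, del M μ ρ k := by
        rw [← Finset.Ioc_insert_left hhH, Finset.sum_insert (by simp), Finset.Icc_add_one_left_eq_Ioc]
      rw [hdecomp, hsplit, mul_add]
      exact add_le_add hf ihm

end Aux2
open LayeredMDP in
/-- PSDP under policy realizability and pushforward concentrability
(deterministic core of the theorem "PSDP with realizability + pushforward
concentrability"). -/
theorem psdp_realizability_pushforward
    {X A : Type} [Fintype X] [Fintype A] [Nonempty A]
    {H : ℕ} (M : LayeredMDP X A H)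
    (Pi : Finset (X → A)) (hPi : Pi.Nonempty)
    (μ : ℕ → X → ℝ) (hμ : M.IsReset μ)
    (πs : X → A) (hopt : M.IsOptimal πs) (hreal : πs ∈ Pi)
    (Cpush : ℝ) (hCpush : 1 ≤ Cpush)
    (hpush : ∀ h, 2 ≤ h → h ≤ H → ∀ x a x', M.layer x = h - 1 → M.layer x' = h →
      M.P x a x' ≤ Cpush * μ h x')
    (hinit : ∀ x, M.layer x = 1 → M.d1 x ≤ Cpush * μ 1 x)
    (εstat : ℝ) (hεstat : 0 ≤ εstat)
    (pick : ℕ → X → A)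
    (hmem : ∀ h, 1 ≤ h → h ≤ H → M.memLayer Pi h (pick h))
    (hCB : ∀ h, 1 ≤ h → h ≤ H →
      M.CB Pi (μ h) εstat (fun x => pick (M.layer x) x) (pick h)) :
    M.value πs - M.value (fun x => pick (M.layer x) x) ≤
      (H : ℝ) ^ 2 * (2 * Cpush) ^ (H + 1) * εstat := by
  classical
  rcases isEmpty_or_nonempty X with hE | hne
  · have h0 := M.d1_sum_one
    rw [Finset.univ_eq_empty, Finset.sum_empty] at h0
    norm_num at h0
  obtain ⟨x0⟩ := hne
  have hH1 : 1 ≤ H := le_trans (M.layer_lb x0) (M.layer_ub x0)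
  have hC0 : (0:ℝ) ≤ Cpush := by linarith
  have hμnn : ∀ h x, 0 ≤ μ h x := hμ.1
  set ρ : X → A := fun x => pick (M.layer x) x with hρ
  -- CB-based bound on the per-layer gap
  have hCBineq : ∀ h, 1 ≤ h → h ≤ H →
      del M μ ρ h ≤ (∑ x, μ h x * (M.V πs x - M.Q ρ x (πs x))) + εstat := by
    intro h h1 hhH
    have hCBh := hCB h h1 hhH πs hreal
    have hpick : ∑ x, μ h x * M.Q ρ x (pick h x) = ∑ x, μ h x * M.Q ρ x (ρ x) := by
      refine Finset.sum_congr rfl fun x _ => ?_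
      by_cases hx : μ h x = 0
      · rw [hx, zero_mul, zero_mul]
      · have hl := hμ.2.2 h x h1 hhH hx
        simp [hρ, hl]
    rw [hpick] at hCBh
    have hdel : del M μ ρ h
        = (∑ x, μ h x * (univ.sup' univ_nonempty fun a => M.Q ρ x a))
          - ∑ x, μ h x * M.Q ρ x (ρ x) := by
      simp only [del, gap, mul_sub, Finset.sum_sub_distrib]
    have hsup : ∀ x, (univ.sup' univ_nonempty fun a => M.Q ρ x a) ≤ M.V πs x := by
      intro x
      exact Finset.sup'_le _ _ fun a _ =>
        le_trans (q_mono M ρ πs hopt x a) (bellman_opt M πs hopt x a)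
    have h3 : (∑ x, μ h x * (univ.sup' univ_nonempty fun a => M.Q ρ x a))
        ≤ ∑ x, μ h x * M.V πs x :=
      Finset.sum_le_sum fun x _ => mul_le_mul_of_nonneg_left (hsup x) (hμnn h x)
    have h4 : (∑ x, μ h x * (M.V πs x - M.Q ρ x (πs x)))
        = (∑ x, μ h x * M.V πs x) - ∑ x, μ h x * M.Q ρ x (πs x) := by
      rw [← Finset.sum_sub_distrib]
      exact Finset.sum_congr rfl fun _ _ => mul_sub _ _ _
    linarith
  -- recursion for the per-layer gaps
  have hrec : ∀ h, 1 ≤ h → h ≤ H →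
      del M μ ρ h ≤ εstat + Cpush * ∑ k ∈ Finset.Icc (h + 1) H, del M μ ρ k := by
    intro h h1 hhH
    rcases eq_or_lt_of_le hhH with htop | hlt
    · have hz : (∑ x, μ h x * (M.V πs x - M.Q ρ x (πs x))) ≤ 0 := by
        apply Finset.sum_nonpos
        intro x _
        by_cases hx : μ h x = 0
        · rw [hx, zero_mul]
        · have hl : M.layer x = H := by rw [hμ.2.2 h x h1 hhH hx]; exact htop
          have hzz : M.V πs x - M.Q ρ x (πs x) = 0 := by
            rw [v_eq_q M πs x, q_top M πs x (πs x) hl, q_top M ρ x (πs x) hl, sub_self]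
          rw [hzz, mul_zero]
      rw [Finset.Icc_eq_empty (by omega), Finset.sum_empty, mul_zero, add_zero]
      have := hCBineq h h1 hhH
      linarith
    · obtain ⟨hνnn, hνsupp, hνsum, hνle⟩ :=
        pushed M μ hμnn Cpush hC0 hpush πs h hlt (μ h) (hμnn h)
          (fun x hx => hμ.2.2 h x h1 hhH hx) (le_of_eq (hμ.2.1 h h1 hhH))
      have hkey := key_bound M μ hμnn πs ρ Cpush hC0 hpush (H - h) (h + 1)
        (fun x' => ∑ x, μ h x * M.P x (πs x) x')
        (by omega) (by omega) (by omega) hνnn hνsupp hνsum hνle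
      have heq2 : (∑ x, μ h x * (M.V πs x - M.Q ρ x (πs x)))
          = ∑ x', (∑ x, μ h x * M.P x (πs x) x') * (M.V πs x' - M.V ρ x') := by
        have hterm : ∀ x, μ h x * (M.V πs x - M.Q ρ x (πs x))
            = ∑ x', μ h x * (M.P x (πs x) x' * (M.V πs x' - M.V ρ x')) := by
          intro x
          by_cases hx : μ h x = 0
          · simp [hx]
          · have hl : M.layer x < H := by rw [hμ.2.2 h x h1 hhH hx]; exact hlt
            have hid : M.V πs x - M.Q ρ x (πs x)
                = ∑ x', M.P x (πs x) x' * (M.V πs x' - M.V ρ x') := by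
              have e3 : (∑ x', M.P x (πs x) x' * (M.V πs x' - M.V ρ x'))
                  = (∑ x', M.P x (πs x) x' * M.V πs x')
                    - ∑ x', M.P x (πs x) x' * M.V ρ x' := by
                rw [← Finset.sum_sub_distrib]
                exact Finset.sum_congr rfl fun _ _ => mul_sub _ _ _
              rw [v_eq_q M πs x, q_expand M πs x (πs x) hl, q_expand M ρ x (πs x) hl, e3]
              ring
            rw [hid, Finset.mul_sum]
        rw [Finset.sum_congr rfl fun x _ => hterm x, Finset.sum_comm]
        refine Finset.sum_congr rfl fun x' _ => ?_
        rw [Finset.sum_mul]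
        exact Finset.sum_congr rfl fun x _ => (mul_assoc _ _ _).symm
      have hcb := hCBineq h h1 hhH
      rw [heq2] at hcb
      linarith
  -- geometric recursion
  have hgeo : ∀ m, m ≤ H →
      Cpush * (∑ k ∈ Finset.Icc (H + 1 - m) H, del M μ ρ k) + εstat
        ≤ (1 + Cpush) ^ m * εstat := by
    intro m
    induction m with
    | zero =>
      intro _
      rw [Finset.Icc_eq_empty (by omega), Finset.sum_empty, mul_zero, zero_add,
        pow_zero, one_mul]
    | succ m ihm =>
      intro hm
      have ih := ihm (by omega)
      have hrecm := hrec (H - m) (by omega) (by omega)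
      have hidx : H - m + 1 = H + 1 - m := by omega
      rw [hidx] at hrecm
      have hsplit : (∑ k ∈ Finset.Icc (H + 1 - (m + 1)) H, del M μ ρ k)
          = del M μ ρ (H - m) + ∑ k ∈ Finset.Icc (H + 1 - m) H, del M μ ρ k := by
        have he : H + 1 - (m + 1) = H - m := by omega
        rw [he, ← hidx, ← Finset.Ioc_insert_left (by omega : H - m ≤ H),
          Finset.sum_insert (by simp), Finset.Icc_add_one_left_eq_Ioc]
      rw [hsplit]
      have e1 := mul_le_mul_of_nonneg_left hrecm hC0
      have e2 := mul_le_mul_of_nonneg_left ih (by linarith : (0:ℝ) ≤ 1 + Cpush)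
      have hpow : (1 + Cpush) ^ (m + 1) = (1 + Cpush) * (1 + Cpush) ^ m := by
        rw [pow_succ]; ring
      rw [hpow]
      nlinarith [e1, e2]
  -- assemble
  have hval : M.value πs - M.value ρ = ∑ x, M.d1 x * (M.V πs x - M.V ρ x) := by
    unfold LayeredMDP.value
    rw [← Finset.sum_sub_distrib]
    exact Finset.sum_congr rfl fun x _ => (mul_sub _ _ _).symm
  have hd1le : ∀ x, M.d1 x ≤ Cpush * μ 1 x := by
    intro x
    by_cases hx : M.d1 x = 0
    · rw [hx]; exact mul_nonneg hC0 (hμnn 1 x)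
    · exact hinit x (M.d1_supp x hx)
  have hmain := key_bound M μ hμnn πs ρ Cpush hC0 hpush H 1 M.d1
    (by omega) le_rfl hH1 M.d1_nonneg M.d1_supp (le_of_eq M.d1_sum_one) hd1le
  have hg := hgeo H le_rfl
  have h11 : H + 1 - H = 1 := by omega
  rw [h11] at hg
  have hfin : M.value πs - M.value ρ ≤ (1 + Cpush) ^ H * εstat := by
    rw [hval]; linarith
  have hb1 : (1 + Cpush) ^ H ≤ (2 * Cpush) ^ H :=
    pow_le_pow_left₀ (by linarith) (by linarith) H
  have hb2 : (2 * Cpush) ^ H ≤ (2 * Cpush) ^ (H + 1) :=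
    pow_le_pow_right₀ (by linarith) (Nat.le_succ H)
  have hb3 : (1:ℝ) ≤ (H:ℝ) ^ 2 := by
    have h1H : (1:ℝ) ≤ (H:ℝ) := by exact_mod_cast hH1
    nlinarith
  have hb4 : (0:ℝ) ≤ (2 * Cpush) ^ (H + 1) := pow_nonneg (by linarith) _
  calc M.value πs - M.value ρ ≤ (1 + Cpush) ^ H * εstat := hfin
    _ ≤ (2 * Cpush) ^ (H + 1) * εstat :=
        mul_le_mul_of_nonneg_right (le_trans hb1 hb2) hεstat
    _ ≤ (H : ℝ) ^ 2 * (2 * Cpush) ^ (H + 1) * εstat := by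
        nlinarith [mul_nonneg (mul_nonneg (by linarith : (0:ℝ) ≤ (H:ℝ) ^ 2 - 1) hb4) hεstat]
end

section
/- Policy completeness error is controlled by pushforward concentrability: Let M be a finite-horizon layered MDP with horizon H and Π a policy class containing an optimal policy π⋆, and suppose μ satisfies pushforward concentrability with parameter C_push. Then for every layer h < H and every partial policy π̂ on layers h+1, …, H: ε_PC(π̂) ≤ C_push · E_{x'∼μ_{h+1}}[V⋆(x') − V^{π̂}(x')], where V^{π̂}(x') denotes the value of π̂ started from x' ∈ X_{h+1}. -/
open Finset

/-- `Vsteps π n y` depends on `π` only through its actions at layers `≥ L ≤ layer y`,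
provided `n + layer y ≤ H + 1`. -/
lemma Vsteps_congr_aux {X A : Type} [Fintype X] [Fintype A] {H : ℕ}
    (M : LayeredMDP X A H) (π π' : X → A) (L : ℕ)
    (hagree : ∀ z, L ≤ M.layer z → π z = π' z) :
    ∀ n y, L ≤ M.layer y → n + M.layer y ≤ H + 1 →
      M.Vsteps π n y = M.Vsteps π' n y := by
  intro n
  induction n with
  | zero => intro y _ _; simp [LayeredMDP.Vsteps]
  | succ n ih =>
    intro y hy hn
    simp only [LayeredMDP.Vsteps]
    rw [hagree y hy]
    congr 1
    refine Finset.sum_congr rfl fun z _ => ?_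
    rcases eq_or_ne (M.P y (π' y) z) 0 with h0 | h0
    · rw [h0]; ring
    rcases Nat.eq_zero_or_pos n with hn0 | hn0
    · subst hn0; simp [LayeredMDP.Vsteps]
    have hyH : M.layer y < H := by omega
    have hz := M.P_supp y (π' y) z hyH h0
    rw [ih z (by omega) (by omega)]

open LayeredMDP in
/-- The policy completeness error is controlled by pushforward
concentrability: for every layer `h < H` and every partial policy `π̂` on layers
`h+1, …, H` (represented by the rollout `ρ`),
`ε_PC(π̂) ≤ C_push · E_{x'∼μ_{h+1}}[V⋆(x') − V^{π̂}(x')]`. -/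
theorem epsPC_le_pushforward
    {X A : Type} [Fintype X] [Fintype A] [Nonempty A]
    {H : ℕ} (M : LayeredMDP X A H)
    (Pi : Finset (X → A)) (hPi : Pi.Nonempty)
    (μ : ℕ → X → ℝ) (hμ : M.IsReset μ)
    (πs : X → A) (hopt : M.IsOptimal πs) (hreal : πs ∈ Pi)
    (Cpush : ℝ)
    (hpush : ∀ h, 2 ≤ h → h ≤ H → ∀ x a x', M.layer x = h - 1 → M.layer x' = h →
      M.P x a x' ≤ Cpush * μ h x')
    (h : ℕ) (h1 : 1 ≤ h) (hH : h < H) (ρ : X → A) :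
    M.epsPC Pi hPi (μ h) ρ ≤ Cpush * ∑ x, μ (h + 1) x * (M.V πs x - M.V ρ x) := by
  classical
  obtain ⟨hμnn, hμsum, hμsupp⟩ := hμ
  have hVle : ∀ x', M.V ρ x' ≤ M.V πs x' := fun x' => hopt x' ρ
  -- Cpush is nonnegative
  have hC : 0 ≤ Cpush := by
    obtain ⟨x0, hx0⟩ := M.layer_surj h h1 hH.le
    have a0 : A := Classical.arbitrary A
    have hs := M.P_sum_one x0 a0 (by omega)
    by_contra hCneg
    push_neg at hCneg
    have hzero : ∀ x', M.P x0 a0 x' = 0 := by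
      intro x'
      rcases eq_or_ne (M.P x0 a0 x') 0 with h0 | h0
      · exact h0
      · have hl := M.P_supp x0 a0 x' (by omega) h0
        have hp := hpush (h + 1) (by omega) (by omega) x0 a0 x' (by omega) (by omega)
        have := M.P_nonneg x0 a0 x'
        have := hμnn (h + 1) x'
        nlinarith
    rw [Finset.sum_congr rfl (fun x' _ => hzero x')] at hs
    simp at hs
  set S : ℝ := Cpush * ∑ x, μ (h + 1) x * (M.V πs x - M.V ρ x) with hS
  have hSnn : 0 ≤ S := by
    refine mul_nonneg hC (Finset.sum_nonneg fun x _ => mul_nonneg (hμnn _ _) ?_)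
    linarith [hVle x]
  have hHh : H + 1 - h = (H - h) + 1 := by omega
  -- key per-state bound
  have key : ∀ x, M.layer x = h →
      (univ.sup' univ_nonempty fun a => M.Q ρ x a) - M.Q ρ x (πs x) ≤ S := by
    intro x hx
    -- Vsteps on the support equals V
    have hsuppV : ∀ a x', M.P x a x' ≠ 0 →
        (∀ π : X → A, M.Vsteps π (H - h) x' = M.V π x') := by
      intro a x' h0 π
      have hl := M.P_supp x a x' (by omega) h0
      unfold LayeredMDP.V
      rw [hl, hx]
      congr 1
      omega
    -- Q^ρ(x,a) ≤ Q^{πs}(x,a)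
    have hQle : ∀ a, M.Q ρ x a ≤ M.Q πs x a := by
      intro a
      unfold LayeredMDP.Q
      rw [hx]
      refine add_le_add_right (Finset.sum_le_sum fun x' _ => ?_) _
      rcases eq_or_ne (M.P x a x') 0 with h0 | h0
      · rw [h0]; simp
      · rw [hsuppV a x' h0 ρ, hsuppV a x' h0 πs]
        exact mul_le_mul_of_nonneg_left (hVle x') (M.P_nonneg _ _ _)
    -- Q^{πs}(x,a) ≤ Q^{πs}(x, πs x)
    have hQs : ∀ a, M.Q πs x a ≤ M.Q πs x (πs x) := by
      intro a
      set π' : X → A := Function.update πs x a with hπ'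
      have hagree : ∀ z, h + 1 ≤ M.layer z → π' z = πs z := by
        intro z hz
        have : z ≠ x := fun he => by rw [he, hx] at hz; omega
        simp [hπ', Function.update_of_ne this]
      have hV' : M.V π' x = M.Q πs x a := by
        unfold LayeredMDP.V LayeredMDP.Q
        rw [hx, hHh]
        simp only [LayeredMDP.Vsteps]
        have hπ'x : π' x = a := Function.update_self x a πs
        rw [hπ'x]
        congr 1
        refine Finset.sum_congr rfl fun x' _ => ?_
        rcases eq_or_ne (M.P x a x') 0 with h0 | h0
        · rw [h0]; ring
        · have hl := M.P_supp x a x' (by omega) h0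
          rw [Vsteps_congr_aux M π' πs (h + 1) hagree (H - h) x' (by omega) (by omega)]
      have hVs : M.V πs x = M.Q πs x (πs x) := by
        unfold LayeredMDP.V LayeredMDP.Q
        rw [hx, hHh]
        simp only [LayeredMDP.Vsteps]
      calc M.Q πs x a = M.V π' x := hV'.symm
        _ ≤ M.V πs x := hopt x π'
        _ = M.Q πs x (πs x) := hVs
    have hsup : (univ.sup' univ_nonempty fun a => M.Q ρ x a) ≤ M.Q πs x (πs x) :=
      Finset.sup'_le _ _ fun a _ => (hQle a).trans (hQs a)
    have hdiff : M.Q πs x (πs x) - M.Q ρ x (πs x) ≤ S := by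
      unfold LayeredMDP.Q
      rw [hx]
      have : ∀ x' : X, M.P x (πs x) x' * M.Vsteps πs (H - h) x'
          - M.P x (πs x) x' * M.Vsteps ρ (H - h) x'
          ≤ Cpush * (μ (h + 1) x' * (M.V πs x' - M.V ρ x')) := by
        intro x'
        rcases eq_or_ne (M.P x (πs x) x') 0 with h0 | h0
        · rw [h0]
          have : 0 ≤ μ (h + 1) x' * (M.V πs x' - M.V ρ x') :=
            mul_nonneg (hμnn _ _) (by linarith [hVle x'])
          nlinarith
        · have hl := M.P_supp x (πs x) x' (by omega) h0
          rw [hsuppV (πs x) x' h0 ρ, hsuppV (πs x) x' h0 πs]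
          have hp := hpush (h + 1) (by omega) (by omega) x (πs x) x' (by omega) (by omega)
          have hd : 0 ≤ M.V πs x' - M.V ρ x' := by linarith [hVle x']
          nlinarith [M.P_nonneg x (πs x) x']
      calc (M.R x (πs x) + ∑ x', M.P x (πs x) x' * M.Vsteps πs (H - h) x')
            - (M.R x (πs x) + ∑ x', M.P x (πs x) x' * M.Vsteps ρ (H - h) x')
          = ∑ x', (M.P x (πs x) x' * M.Vsteps πs (H - h) x'
              - M.P x (πs x) x' * M.Vsteps ρ (H - h) x') := by
            rw [Finset.sum_sub_distrib]; ring
        _ ≤ ∑ x', Cpush * (μ (h + 1) x' * (M.V πs x' - M.V ρ x')) :=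
            Finset.sum_le_sum fun x' _ => this x'
        _ = S := by rw [hS, Finset.mul_sum]
    linarith
  -- conclude
  have step1 : M.epsPC Pi hPi (μ h) ρ ≤
      ∑ x, μ h x * ((univ.sup' univ_nonempty fun a => M.Q ρ x a) - M.Q ρ x (πs x)) :=
    Finset.inf'_le _ hreal
  have step2 : ∑ x, μ h x * ((univ.sup' univ_nonempty fun a => M.Q ρ x a)
      - M.Q ρ x (πs x)) ≤ ∑ x : X, μ h x * S := by
    refine Finset.sum_le_sum fun x _ => ?_
    rcases eq_or_ne (μ h x) 0 with h0 | h0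
    · rw [h0]; simp
    · exact mul_le_mul_of_nonneg_left (key x (hμsupp h x h1 hH.le h0)) (hμnn _ _)
  have step3 : ∑ x : X, μ h x * S = S := by
    rw [← Finset.sum_mul, hμsum h h1 hH.le, one_mul]
  calc M.epsPC Pi hPi (μ h) ρ ≤ _ := step1
    _ ≤ ∑ x : X, μ h x * S := step2
    _ = S := step3
end

section
/- Decoding via valid test policies (deterministic core of the decoding lemma for PLHR.D): Let S' and Π be finite nonempty sets, V, V̂ : S' × Π → ℝ, s⋆ ∈ S', P₀ ⊆ S' with s⋆ ∈ P₀, v̂ : Π → ℝ, and ε_tol > 0. For every ordered pair (s, s') ∈ S' × S' let π_{s,s'} ∈ Π be a maximizer over π ∈ Π of |V̂(s, π) − V̂(s', π)|. Assume: (i) test-policy accuracy: for every pair (s, s'), |V(s, π_{s,s'}) − V̂(s, π_{s,s'})| ≤ ε_tol and |V(s', π_{s,s'}) − V̂(s', π_{s,s'})| ≤ ε_tol; (ii) Monte Carlo accuracy: |v̂(π_{s,s'}) − V(s⋆, π_{s,s'})| ≤ ε_tol/2 for every pair (s, s'). Define P := P₀ ∩ {s ∈ S' : for all s' ≠ s,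 |v̂(π_{s,s'}) − V̂(s, π_{s,s'})| ≤ 2·ε_tol}. Then: (1) s⋆ ∈ P; and (2) every s̄ ∈ P satisfies max_{π∈Π} |V̂(s⋆, π) − V̂(s̄, π)| ≤ (7/2)·ε_tol. -/
/-- Decoding via valid test policies (deterministic core of the
decoding lemma for `PLHR.D`): if the test policies `t s s'` are maximally
distinguishing and `ε_tol`-accurate, and the Monte Carlo estimates `v̂` from the true
next state `s⋆` are `ε_tol/2`-accurate, then `s⋆` survives the tournament, and every
survivor `s̄` has estimated values within `(7/2)·ε_tol` of those of `s⋆` for every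
policy. -/
theorem decoding_via_test_policies
    {S' Pol : Type} [Fintype S'] [Fintype Pol] [Nonempty S'] [Nonempty Pol]
    (V Vhat : S' → Pol → ℝ) (sstar : S') (P0 : Set S') (hs : sstar ∈ P0)
    (vhat : Pol → ℝ) (εtol : ℝ) (hεtol : 0 < εtol)
    (t : S' → S' → Pol)
    (hmax : ∀ s s' : S', ∀ π : Pol,
      |Vhat s π - Vhat s' π| ≤ |Vhat s (t s s') - Vhat s' (t s s')|)
    (hacc : ∀ s s' : S',
      |V s (t s s') - Vhat s (t s s')| ≤ εtol ∧
        |V s' (t s s') - Vhat s' (t s s')| ≤ εtol)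
    (hmc : ∀ s s' : S', |vhat (t s s') - V sstar (t s s')| ≤ εtol / 2) :
    sstar ∈ P0 ∩ {s : S' | ∀ s' ≠ s, |vhat (t s s') - Vhat s (t s s')| ≤ 2 * εtol} ∧
    ∀ sb ∈ P0 ∩ {s : S' | ∀ s' ≠ s, |vhat (t s s') - Vhat s (t s s')| ≤ 2 * εtol},
      ∀ π : Pol, |Vhat sstar π - Vhat sb π| ≤ 7 / 2 * εtol := by
  constructor
  · refine ⟨hs, fun s' _ => ?_⟩
    have h1 := hmc sstar s'
    have h2 := (hacc sstar s').1
    calc |vhat (t sstar s') - Vhat sstar (t sstar s')|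
        ≤ |vhat (t sstar s') - V sstar (t sstar s')| +
          |V sstar (t sstar s') - Vhat sstar (t sstar s')| := abs_sub_le _ _ _
      _ ≤ εtol / 2 + εtol := add_le_add h1 h2
      _ ≤ 2 * εtol := by linarith
  · rintro sb ⟨-, hsb⟩ π
    by_cases h : sb = sstar
    · subst h; simp; linarith
    · have hkey : |Vhat sstar π - Vhat sb π| ≤ |Vhat sb (t sb sstar) - Vhat sstar (t sb sstar)| := by
        have := hmax sb sstar π
        rwa [abs_sub_comm] at this
      have h1 : |vhat (t sb sstar) - Vhat sb (t sb sstar)| ≤ 2 * εtol :=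
        hsb sstar (fun hc => h hc.symm)
      have h2 := hmc sb sstar
      have h3 := (hacc sb sstar).2
      calc |Vhat sstar π - Vhat sb π|
          ≤ |Vhat sb (t sb sstar) - Vhat sstar (t sb sstar)| := hkey
        _ ≤ |Vhat sb (t sb sstar) - vhat (t sb sstar)| +
            |vhat (t sb sstar) - V sstar (t sb sstar)| +
            |V sstar (t sb sstar) - Vhat sstar (t sb sstar)| := by
              have := abs_sub_le (Vhat sb (t sb sstar)) (vhat (t sb sstar)) (Vhat sstar (t sb sstar))
              have := abs_sub_le (vhat (t sb sstar)) (V sstar (t sb sstar)) (Vhat sstar (t sb sstar))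
              linarith
        _ ≤ 2 * εtol + εtol / 2 + εtol := by
            refine add_le_add (add_le_add ?_ h2) h3
            rwa [abs_sub_comm]
        _ = 7 / 2 * εtol := by ring
end

section
/- A certificate of value inaccuracy implies an inaccurate estimated transition (certificate lemma for the Refit subroutine): Let M be a finite-horizon layered MDP with horizon H, let M̂ be an estimated MDP over a subset X̂ ⊆ X, and let ε > 0 satisfy |R̂(x, a) − R(x, a)| ≤ ε/H for all (x, a) ∈ X̂ × A. Let ε_tol > 2·ε. If a deterministic policy π : X → A, a layer h, and a state x ∈ X̂_h satisfy |V̂^π(x) − V^π(x)| ≥ ε_tol, then there exist a layer h' with h ≤ h' < H and a state x̄ ∈ X̂_{h'} such that, writing ā := π(x̄), |E_{x'∼P̂(·|x̄,ā)}[V^π(x')] − E_{x'∼P(·|x̄,ā)}[V^π(x')]| ≥ ε_tol/(2H). -/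
open Finset

/-- Values in an estimated MDP `M̂ = (P̂, R̂)` over a subset of states:
backward recursion with `n` remaining steps. -/
noncomputable def estVsteps {X A : Type} [Fintype X]
    (Phat : X → A → X → ℝ) (Rhat : X → A → ℝ) (π : X → A) : ℕ → X → ℝ
  | 0, _ => 0
  | n + 1, x => Rhat x (π x) + ∑ x', Phat x (π x) x' * estVsteps Phat Rhat π n x'

open LayeredMDP in
/-- A certificate of value inaccuracy implies an inaccurate estimated
transition (certificate lemma for the `Refit` subroutine): if the estimated rewards are
`ε/H`-accurate and `|V̂^π(x) − V^π(x)| ≥ ε_tol > 2ε` at some `x ∈ X̂_h`, then some state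
`x̄ ∈ X̂_{h'}` with `h ≤ h' < H` has an estimated transition whose expected true value
differs from that of the true transition by at least `ε_tol/(2H)`. -/
theorem certificate_implies_bad_transition
    {X A : Type} [Fintype X] [Fintype A]
    {H : ℕ} (M : LayeredMDP X A H)
    (Xhat : Finset X)
    (hXhatNe : ∀ h, 1 ≤ h → h ≤ H → ∃ x ∈ Xhat, M.layer x = h)
    (Phat : X → A → X → ℝ) (Rhat : X → A → ℝ)
    (hPhat : ∀ x ∈ Xhat, M.layer x < H → ∀ a : A,
      (∀ x', 0 ≤ Phat x a x') ∧ (∑ x', Phat x a x' = 1) ∧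
        (∀ x', Phat x a x' ≠ 0 → x' ∈ Xhat ∧ M.layer x' = M.layer x + 1))
    (ε : ℝ) (hε : 0 < ε)
    (hR : ∀ x ∈ Xhat, ∀ a : A, |Rhat x a - M.R x a| ≤ ε / H)
    (εtol : ℝ) (htol : 2 * ε < εtol)
    (π : X → A) (h : ℕ) (x : X) (hx : x ∈ Xhat) (hxl : M.layer x = h)
    (hcert : εtol ≤ |estVsteps Phat Rhat π (H + 1 - h) x - M.V π x|) :
    ∃ (h' : ℕ) (xb : X), h ≤ h' ∧ h' < H ∧ xb ∈ Xhat ∧ M.layer xb = h' ∧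
      εtol / (2 * H) ≤
        |(∑ x', Phat xb (π xb) x' * M.V π x') - ∑ x', M.P xb (π xb) x' * M.V π x'| := by

  by_contra hcon
  push_neg at hcon
  have hH : 0 < H := lt_of_lt_of_le (M.layer_lb x) (M.layer_ub x)
  have hh1 : 1 ≤ h := hxl ▸ M.layer_lb x
  have hhH : h ≤ H := hxl ▸ M.layer_ub x
  have hεtol : 0 < εtol := by linarith
  set B : ℝ := εtol / (2 * H) with hB
  have hBpos : 0 < B := by positivity
  have hεH : 0 ≤ ε / H := by positivity
  have hbad : ∀ xb ∈ Xhat, h ≤ M.layer xb → M.layer xb < H →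
      |(∑ x', Phat xb (π xb) x' * M.V π x') - ∑ x', M.P xb (π xb) x' * M.V π x'| < B := by
    intro xb hxb h1 h2
    have := hcon (M.layer xb) xb h1 h2 hxb rfl
    linarith
  have key : ∀ n : ℕ, ∀ y ∈ Xhat, h ≤ M.layer y → M.layer y + n = H + 1 →
      |estVsteps Phat Rhat π n y - M.Vsteps π n y| ≤
        (n : ℝ) * (ε / H) + ((n - 1 : ℕ) : ℝ) * B := by
    intro n
    induction n with
    | zero =>
      intro y hy _ _
      simp [estVsteps, LayeredMDP.Vsteps]
    | succ m ih =>
      intro y hy hly hsum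
      show |estVsteps Phat Rhat π (m+1) y - M.Vsteps π (m+1) y| ≤ _
      rw [show estVsteps Phat Rhat π (m+1) y =
          Rhat y (π y) + ∑ x', Phat y (π y) x' * estVsteps Phat Rhat π m x' from rfl,
        show M.Vsteps π (m+1) y =
          M.R y (π y) + ∑ x', M.P y (π y) x' * M.Vsteps π m x' from rfl]
      rcases Nat.eq_zero_or_pos m with hm0 | hmpos
      · subst hm0
        simp only [estVsteps, LayeredMDP.Vsteps, mul_zero, Finset.sum_const_zero]
        have hRy := hR y hy (π y)
        have : |Rhat y (π y) + 0 - (M.R y (π y) + 0)| = |Rhat y (π y) - M.R y (π y)| := by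
          ring_nf
        rw [this]
        push_cast
        simpa using hRy
      · have hlyH : M.layer y < H := by omega
        obtain ⟨hPnn, hPsum, hPsupp⟩ := hPhat y hy hlyH (π y)
        have hVeqhat : ∑ x', Phat y (π y) x' * M.Vsteps π m x'
            = ∑ x', Phat y (π y) x' * M.V π x' := by
          apply Finset.sum_congr rfl
          intro x' _
          by_cases hz : Phat y (π y) x' = 0
          · simp [hz]
          · have hl := (hPsupp x' hz).2
            have hnn : H + 1 - M.layer x' = m := by omega
            rw [LayeredMDP.V, hnn]
        have hVeqP : ∑ x', M.P y (π y) x' * M.Vsteps π m x'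
            = ∑ x', M.P y (π y) x' * M.V π x' := by
          apply Finset.sum_congr rfl
          intro x' _
          by_cases hz : M.P y (π y) x' = 0
          · simp [hz]
          · have hl := M.P_supp y (π y) x' hlyH hz
            have hnn : H + 1 - M.layer x' = m := by omega
            rw [LayeredMDP.V, hnn]
        have hdecomp :
            Rhat y (π y) + (∑ x', Phat y (π y) x' * estVsteps Phat Rhat π m x')
              - (M.R y (π y) + ∑ x', M.P y (π y) x' * M.Vsteps π m x')
            = (Rhat y (π y) - M.R y (π y))
              + (∑ x', Phat y (π y) x' * (estVsteps Phat Rhat π m x' - M.Vsteps π m x'))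
              + ((∑ x', Phat y (π y) x' * M.V π x') - ∑ x', M.P y (π y) x' * M.V π x') := by
          rw [← hVeqhat, ← hVeqP]
          simp only [mul_sub, Finset.sum_sub_distrib]
          ring
        rw [hdecomp]
        have hA1 : |Rhat y (π y) - M.R y (π y)| ≤ ε / H := hR y hy (π y)
        have hA2 : |∑ x', Phat y (π y) x' * (estVsteps Phat Rhat π m x' - M.Vsteps π m x')|
            ≤ (m : ℝ) * (ε / H) + ((m - 1 : ℕ) : ℝ) * B := by
          calc |∑ x', Phat y (π y) x' * (estVsteps Phat Rhat π m x' - M.Vsteps π m x')|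
              ≤ ∑ x', |Phat y (π y) x' * (estVsteps Phat Rhat π m x' - M.Vsteps π m x')| :=
                Finset.abs_sum_le_sum_abs _ _
            _ = ∑ x', Phat y (π y) x' * |estVsteps Phat Rhat π m x' - M.Vsteps π m x'| := by
                apply Finset.sum_congr rfl
                intro x' _
                rw [abs_mul, abs_of_nonneg (hPnn x')]
            _ ≤ ∑ x', Phat y (π y) x' * ((m : ℝ) * (ε / H) + ((m - 1 : ℕ) : ℝ) * B) := by
                apply Finset.sum_le_sum
                intro x' _
                by_cases hz : Phat y (π y) x' = 0
                · simp [hz]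
                · obtain ⟨hx'mem, hx'l⟩ := hPsupp x' hz
                  exact mul_le_mul_of_nonneg_left
                    (ih x' hx'mem (by omega) (by omega)) (hPnn x')
            _ = (m : ℝ) * (ε / H) + ((m - 1 : ℕ) : ℝ) * B := by
                rw [← Finset.sum_mul, hPsum, one_mul]
        have hA3 : |(∑ x', Phat y (π y) x' * M.V π x') - ∑ x', M.P y (π y) x' * M.V π x'|
            ≤ B := (hbad y hy hly hlyH).le
        have habs := abs_add_le
          ((Rhat y (π y) - M.R y (π y))
            + (∑ x', Phat y (π y) x' * (estVsteps Phat Rhat π m x' - M.Vsteps π m x')))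
          ((∑ x', Phat y (π y) x' * M.V π x') - ∑ x', M.P y (π y) x' * M.V π x')
        have habs2 := abs_add_le (Rhat y (π y) - M.R y (π y))
          (∑ x', Phat y (π y) x' * (estVsteps Phat Rhat π m x' - M.Vsteps π m x'))
        have hc1 : ((m + 1 - 1 : ℕ) : ℝ) = (m : ℝ) := by push_cast; ring
        have hc2 : ((m - 1 : ℕ) : ℝ) = (m : ℝ) - 1 := by
          rw [Nat.cast_sub hmpos]; norm_num
        rw [hc1]
        push_cast
        rw [hc2] at hA2
        linarith
  have hkey := key (H + 1 - h) x hx (by omega) (by omega)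
  have hVx : M.V π x = M.Vsteps π (H + 1 - h) x := by rw [LayeredMDP.V, hxl]
  rw [← hVx] at hkey
  have hcast : ((H + 1 - h : ℕ) : ℝ) ≤ (H : ℝ) := by
    have : H + 1 - h ≤ H := by omega
    exact_mod_cast this
  have hcast2 : ((H + 1 - h - 1 : ℕ) : ℝ) ≤ (H : ℝ) - 1 := by
    have : H + 1 - h - 1 ≤ H - 1 := by omega
    calc ((H + 1 - h - 1 : ℕ) : ℝ) ≤ ((H - 1 : ℕ) : ℝ) := by exact_mod_cast this
      _ = (H : ℝ) - 1 := by rw [Nat.cast_sub hH]; norm_num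
  have hHpos : (0 : ℝ) < H := by exact_mod_cast hH
  have h1 : ((H + 1 - h : ℕ) : ℝ) * (ε / H) ≤ ε := by
    calc ((H + 1 - h : ℕ) : ℝ) * (ε / H) ≤ (H : ℝ) * (ε / H) :=
          mul_le_mul_of_nonneg_right hcast hεH
      _ = ε := by field_simp
  have h2 : ((H + 1 - h - 1 : ℕ) : ℝ) * B < εtol / 2 := by
    have hnn : (0 : ℝ) ≤ ((H + 1 - h - 1 : ℕ) : ℝ) := Nat.cast_nonneg _
    calc ((H + 1 - h - 1 : ℕ) : ℝ) * B ≤ ((H : ℝ) - 1) * B :=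
          mul_le_mul_of_nonneg_right hcast2 hBpos.le
      _ < (H : ℝ) * B := by nlinarith
      _ = εtol / 2 := by rw [hB]; field_simp
  linarith
end

section
/- Bounded width of connected components of a labeled bipartite graph (abstract form of the decoder-graph width lemma): Let G be a bipartite graph on finite disjoint vertex sets L (left) and R (right), all of whose edges join L to R. Let S be a finite set with |S| ≤ k, let φ : R → S be a labeling, let f : R → ℝ, and let α, β ≥ 0. Assume: (a) |f(y) − f(y')| ≤ α for all y, y' ∈ R with φ(y) = φ(y'); and (b) |f(y) − f(y')| ≤ β for all y, y' ∈ R having a common neighbor in L. Then for all y, y' ∈ R lying in the same connected component of G: |f(y) − f(y')| ≤ k·(α + β). -/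
open Classical in
private lemma last_occ_split {γ : Type*} (p : γ → Prop) :
    ∀ (l : List γ), (∃ w ∈ l, p w) →
      ∃ l1 z l2, p z ∧ l = l1 ++ z :: l2 ∧ ∀ w ∈ l2, ¬ p w := by
  intro l
  induction l with
  | nil => rintro ⟨w, hw, -⟩; simp at hw
  | cons a t ih =>
    intro h
    by_cases hex : ∃ w ∈ t, p w
    · obtain ⟨l1, z, l2, hz, heq, hl2⟩ := ih hex
      exact ⟨a :: l1, z, l2, hz, by rw [heq]; rfl, hl2⟩
    · have hpa : p a := by
        obtain ⟨w, hw, hpw⟩ := h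
        rcases List.mem_cons.mp hw with rfl | hw
        · exact hpw
        · exact absurd ⟨w, hw, hpw⟩ hex
      exact ⟨[], a, t, hpa, rfl, fun w hw hpw => hex ⟨w, hw, hpw⟩⟩

private lemma chain_bound {R S : Type} [Fintype S] [DecidableEq S]
    (r : R → R → Prop) (φ : R → S) (f : R → ℝ) (α β : ℝ) (hα : 0 ≤ α) (hβ : 0 ≤ β)
    (ha : ∀ y y' : R, φ y = φ y' → |f y - f y'| ≤ α)
    (hb : ∀ y y' : R, r y y' → |f y - f y'| ≤ β) :
    ∀ (n : ℕ) (l : List R) (y : R), l.length ≤ n → List.Chain r y l →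
      |f y - f ((y :: l).getLast (List.cons_ne_nil _ _))| ≤
        ((((y :: l).map φ).toFinset.card : ℝ)) * (α + β) := by
  intro n
  induction n with
  | zero =>
    intro l y hlen _
    have : l = [] := List.length_eq_zero_iff.mp (Nat.le_zero.mp hlen)
    subst this
    simp only [List.getLast_singleton, sub_self, abs_zero]
    exact mul_nonneg (Nat.cast_nonneg _) (by linarith)
  | succ n ih =>
    intro l y hlen hchain
    -- split off last occurrence of φ y in y :: l
    obtain ⟨l1, z, l2, hz, heq, hl2⟩ :=
      last_occ_split (fun w => φ w = φ y) (y :: l) ⟨y, List.mem_cons_self, rfl⟩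
    have hfyz : |f y - f z| ≤ α := ha y z hz.symm
    have hcard1 : 1 ≤ (((y :: l).map φ).toFinset.card : ℝ) := by
      have : φ y ∈ ((y :: l).map φ).toFinset :=
        List.mem_toFinset.mpr (List.mem_map_of_mem (f := φ) (List.mem_cons_self))
      exact_mod_cast Finset.card_pos.mpr ⟨_, this⟩
    cases l2 with
    | nil =>
      -- z is the last element
      have hq : (y :: l).getLast? = some z := by
        rw [heq, List.getLast?_append_cons]; rfl
      have h1 := List.getLast?_eq_getLast (l := y :: l) (List.cons_ne_nil _ _)
      rw [hq] at h1
      rw [(Option.some.inj h1).symm]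
      calc |f y - f z| ≤ α := hfyz
        _ ≤ 1 * (α + β) := by linarith
        _ ≤ _ := by
          apply mul_le_mul_of_nonneg_right hcard1 (by linarith)
    | cons a l2' =>
      -- chain' on whole list, restrict to suffix z :: a :: l2'
      have hchain' : List.Chain' r (y :: l) := hchain
      have hsuff : List.Chain' r (z :: a :: l2') :=
        hchain'.suffix ⟨l1, by rw [heq]⟩
      have hrza : r z a := (List.isChain_cons_cons.mp hsuff).1
      have hchain2 : List.Chain r a l2' := (List.isChain_cons_cons.mp hsuff).2
      have hlast : (y :: l).getLast (List.cons_ne_nil _ _) =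
          (a :: l2').getLast (List.cons_ne_nil _ _) := by
        have hq : (y :: l).getLast? = (a :: l2').getLast? := by
          rw [heq, List.getLast?_append_cons, List.getLast?_cons_cons]
        have h1 := List.getLast?_eq_getLast (l := y :: l) (List.cons_ne_nil _ _)
        have h2 := List.getLast?_eq_getLast (l := a :: l2') (List.cons_ne_nil _ _)
        rw [h1, h2] at hq
        exact Option.some.inj hq
      -- length bound
      have hlen2 : l2'.length ≤ n := by
        have : (y :: l).length = l1.length + (z :: a :: l2').length := by
          rw [heq, List.length_append]
        simp only [List.length_cons] at this hlen ⊢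
        omega
      have IH := ih l2' a hlen2 hchain2
      -- card bound: labels of a :: l2' avoid φ y, and are among labels of y :: l
      set T := ((y :: l).map φ).toFinset with hT
      have hsub : (((a :: l2').map φ).toFinset) ⊆ T.erase (φ y) := by
        intro s hs
        simp only [List.mem_toFinset, List.mem_map] at hs
        obtain ⟨w, hw, rfl⟩ := hs
        refine Finset.mem_erase.mpr ⟨hl2 w hw, ?_⟩
        rw [hT]
        exact List.mem_toFinset.mpr (List.mem_map_of_mem (f := φ)
          (by rw [heq]; exact List.mem_append_right _ (List.mem_cons_of_mem _ hw)))
      have hcard2 : (((a :: l2').map φ).toFinset.card : ℝ) ≤ (T.card : ℝ) - 1 := by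
        have h1 : ((a :: l2').map φ).toFinset.card ≤ (T.erase (φ y)).card :=
          Finset.card_le_card hsub
        have h2 : (T.erase (φ y)).card = T.card - 1 :=
          Finset.card_erase_of_mem (by
            rw [hT]
            exact List.mem_toFinset.mpr (List.mem_map_of_mem (f := φ) (List.mem_cons_self)))
        have h3 : 1 ≤ T.card := by exact_mod_cast hcard1
        rw [h2] at h1
        have := (Nat.cast_le (α := ℝ)).mpr h1
        rw [Nat.cast_sub h3] at this
        simpa using this
      have hfza : |f z - f a| ≤ β := hb z a hrza
      have htri : |f y - f ((y :: l).getLast (List.cons_ne_nil _ _))| ≤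
          |f y - f z| + |f z - f a| + |f a - f ((a :: l2').getLast (List.cons_ne_nil _ _))| := by
        rw [hlast]
        calc |f y - f ((a :: l2').getLast (List.cons_ne_nil _ _))|
            = |(f y - f z) + (f z - f a) + (f a - f ((a :: l2').getLast (List.cons_ne_nil _ _)))| := by ring_nf
          _ ≤ _ := by
              refine (abs_add_le _ _).trans ?_
              gcongr
              exact abs_add_le _ _
      have hnn : (0:ℝ) ≤ α + β := by linarith
      calc |f y - f ((y :: l).getLast (List.cons_ne_nil _ _))|
          ≤ |f y - f z| + |f z - f a| + |f a - f ((a :: l2').getLast (List.cons_ne_nil _ _))| := htri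
        _ ≤ α + β + (((a :: l2').map φ).toFinset.card : ℝ) * (α + β) := by
            gcongr
        _ ≤ α + β + ((T.card : ℝ) - 1) * (α + β) := by gcongr
        _ = (T.card : ℝ) * (α + β) := by ring

/-- Bounded width of connected components of a labeled bipartite
graph (abstract form of the decoder-graph width lemma).  The bipartite graph on the
disjoint vertex sets `L` (left) and `R` (right) is given by the edge relation
`E : L → R → Prop`; two right vertices lie in the same connected component exactly
when they are joined by a chain of right vertices in which consecutive elements share
a common left neighbor. -/
theorem decoder_graph_component_width
    {L R S : Type} [Fintype L] [Fintype R] [Fintype S]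
    (E : L → R → Prop) (k : ℕ) (hS : Fintype.card S ≤ k)
    (φ : R → S) (f : R → ℝ) (α β : ℝ) (hα : 0 ≤ α) (hβ : 0 ≤ β)
    (ha : ∀ y y' : R, φ y = φ y' → |f y - f y'| ≤ α)
    (hb : ∀ (y y' : R) (l : L), E l y → E l y' → |f y - f y'| ≤ β) :
    ∀ y y' : R, Relation.ReflTransGen (fun u v : R => ∃ l : L, E l u ∧ E l v) y y' →
      |f y - f y'| ≤ (k : ℝ) * (α + β) := by
  intro y y' h
  letI : DecidableEq S := Classical.decEq S
  obtain ⟨l, hchain, hlast⟩ := List.exists_isChain_cons_of_relationReflTransGen h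
  have hb' : ∀ u v : R, (∃ l : L, E l u ∧ E l v) → |f u - f v| ≤ β := by
    rintro u v ⟨l, hu, hv⟩; exact hb u v l hu hv
  have := chain_bound _ φ f α β hα hβ ha hb' l.length l y le_rfl hchain
  rw [hlast] at this
  refine this.trans ?_
  have hcard : (((y :: l).map φ).toFinset.card : ℝ) ≤ (k : ℝ) := by
    exact_mod_cast (Finset.card_le_univ _).trans hS
  have : (0:ℝ) ≤ α + β := by linarith
  exact mul_le_mul_of_nonneg_right hcard this
end

section
/- Projected mass of a connected component of the decoder graph: Let L and R be disjoint finite sets with L nonempty, let S be a finite set, let φ : L ∪ R → S, and let T assign to each l ∈ L a subset T(l) ⊆ R satisfying validity: for every l ∈ L, every r ∈ R with φ(r) = φ(l) belongs to T(l). Let G be the bipartite graph on L ∪ R with an edge between l ∈ L and r ∈ R iff r ∈ T(l). Let S_ε ⊆ S be a set of labels such that every s ∈ S_ε is the label of at least one element of R. For a label s and a finite set W write n_s[W] := |{w ∈ W : φ(w) = s}|, and define p̃(s) := n_s[L]/|L| and, for r ∈ R, proj(p̃)(r) := p̃(φ(r))·1{φ(r) ∈ S_ε}/n_{φ(r)}[R].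 Then for every connected component C of G, writing C_L := C ∩ L and C_R := C ∩ R: Σ_{r∈C_R} proj(p̃)(r) = Σ_{s ∈ S_ε ∩ φ(C_L) ∩ φ(C_R)} p̃(s). -/
open Finset
open scoped Classical

/-- Adjacency of the decoder graph: the bipartite graph on `L ⊕ R` with an edge
between `l : L` and `r : R` iff `r ∈ T l`. -/
def decAdj {L R : Type} (T : L → Finset R) : (L ⊕ R) → (L ⊕ R) → Prop
  | Sum.inl l, Sum.inr r => r ∈ T l
  | Sum.inr r, Sum.inl l => r ∈ T l
  | _, _ => False

/-- `v` and `w` lie in the same connected component of the decoder graph. -/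
def decReach {L R : Type} (T : L → Finset R) (v w : L ⊕ R) : Prop :=
  Relation.ReflTransGen (decAdj T) v w

/-- `n_s[L]`: number of left elements with label `s`. -/
noncomputable def nLeft {L R S : Type} [Fintype L] (φ : L ⊕ R → S) (s : S) : ℕ :=
  (Finset.univ.filter fun l : L => φ (Sum.inl l) = s).card

/-- `n_s[R]`: number of right elements with label `s`. -/
noncomputable def nRight {L R S : Type} [Fintype R] (φ : L ⊕ R → S) (s : S) : ℕ :=
  (Finset.univ.filter fun r : R => φ (Sum.inr r) = s).card

/-- The empirical latent distribution `p̃(s) = n_s[L]/|L|`. -/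
noncomputable def ptil {L R S : Type} [Fintype L] (φ : L ⊕ R → S) (s : S) : ℝ :=
  (nLeft φ s : ℝ) / (Fintype.card L : ℝ)

/-- The projected measure `proj(p̃)(r) = p̃(φ(r))·1{φ(r) ∈ S_ε}/n_{φ(r)}[R]`. -/
noncomputable def projMeas {L R S : Type} [Fintype L] [Fintype R]
    (φ : L ⊕ R → S) (Sε : Finset S) (r : R) : ℝ :=
  if φ (Sum.inr r) ∈ Sε then
    ptil φ (φ (Sum.inr r)) / (nRight φ (φ (Sum.inr r)) : ℝ)
  else 0

/-- Projected mass of a connected component of the decoder graph: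
under validity of the decoding function `T` and representation of every
`s ∈ S_ε` among the right vertices, the projected mass of the right part `C_R` of any
connected component `C` equals `Σ_{s ∈ S_ε ∩ φ(C_L) ∩ φ(C_R)} p̃(s)`. -/
theorem projected_mass_of_component
    {L R S : Type} [Fintype L] [Fintype R] [Fintype S] [Nonempty L]
    (φ : L ⊕ R → S) (T : L → Finset R)
    (hvalid : ∀ (l : L) (r : R), φ (Sum.inr r) = φ (Sum.inl l) → r ∈ T l)
    (Sε : Finset S) (hSε : ∀ s ∈ Sε, ∃ r : R, φ (Sum.inr r) = s)
    (v : L ⊕ R) :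
    (∑ r : R, if decReach T v (Sum.inr r) then projMeas φ Sε r else 0) =
      ∑ s ∈ Sε,
        if (∃ l : L, decReach T v (Sum.inl l) ∧ φ (Sum.inl l) = s) ∧
            (∃ r : R, decReach T v (Sum.inr r) ∧ φ (Sum.inr r) = s) then
          ptil φ s
        else 0 := by
  classical
  have key : ∀ s : S,
      (∑ r ∈ Finset.univ.filter fun r : R => φ (Sum.inr r) = s,
        if decReach T v (Sum.inr r) then projMeas φ Sε r else 0) =
      (if s ∈ Sε ∧ (∃ l : L, decReach T v (Sum.inl l) ∧ φ (Sum.inl l) = s) ∧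
            (∃ r : R, decReach T v (Sum.inr r) ∧ φ (Sum.inr r) = s) then
          ptil φ s else 0) := by
    intro s
    by_cases hs : s ∈ Sε
    · set c : ℝ := ptil φ s / (nRight φ s : ℝ) with hc
      have hterm : ∀ r ∈ Finset.univ.filter fun r : R => φ (Sum.inr r) = s,
          (if decReach T v (Sum.inr r) then projMeas φ Sε r else 0) =
          (if decReach T v (Sum.inr r) then c else 0) := by
        intro r hr
        rw [Finset.mem_filter] at hr
        simp [projMeas, hr.2, hs, hc]
      rw [Finset.sum_congr rfl hterm, Finset.sum_ite, Finset.sum_const,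
        Finset.sum_const_zero, add_zero]
      by_cases hB : ∃ r : R, decReach T v (Sum.inr r) ∧ φ (Sum.inr r) = s
      · by_cases hA : ∃ l : L, decReach T v (Sum.inl l) ∧ φ (Sum.inl l) = s
        · obtain ⟨l, hlreach, hls⟩ := hA
          have hfull : ((Finset.univ.filter fun r : R => φ (Sum.inr r) = s).filter
              fun r => decReach T v (Sum.inr r)) =
              Finset.univ.filter fun r : R => φ (Sum.inr r) = s := by
            apply Finset.filter_true_of_mem
            intro r hr
            rw [Finset.mem_filter] at hr
            have hedge : decAdj T (Sum.inl l) (Sum.inr r) :=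
              hvalid l r (by rw [hr.2, hls])
            exact hlreach.tail hedge
          rw [hfull]
          have hcard : ((Finset.univ.filter fun r : R => φ (Sum.inr r) = s).card) =
              nRight φ s := rfl
          rw [hcard]
          have hne : (nRight φ s : ℝ) ≠ 0 := by
            obtain ⟨r0, hr0⟩ := hSε s hs
            have : r0 ∈ Finset.univ.filter fun r : R => φ (Sum.inr r) = s := by
              simp [hr0]
            have hpos : 0 < nRight φ s := Finset.card_pos.mpr ⟨r0, this⟩
            exact_mod_cast hpos.ne'
          rw [if_pos ⟨hs, ⟨l, hlreach, hls⟩, hB⟩]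
          rw [nsmul_eq_mul, hc]
          field_simp
        · obtain ⟨r0, hr0reach, hr0s⟩ := hB
          have hnL : nLeft φ s = 0 := by
            rw [nLeft, Finset.card_eq_zero, Finset.filter_eq_empty_iff]
            intro l _ hls
            have hedge : decAdj T (Sum.inr r0) (Sum.inl l) :=
              hvalid l r0 (by rw [hr0s, hls])
            exact hA ⟨l, hr0reach.tail hedge, hls⟩
          have hc0 : c = 0 := by simp [hc, ptil, hnL]
          rw [if_neg (fun h => hA h.2.1), hc0, smul_zero]
      · have hempty : ((Finset.univ.filter fun r : R => φ (Sum.inr r) = s).filter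
            fun r => decReach T v (Sum.inr r)) = ∅ := by
          rw [Finset.filter_eq_empty_iff]
          intro r hr hreach
          rw [Finset.mem_filter] at hr
          exact hB ⟨r, hreach, hr.2⟩
        rw [hempty, if_neg (fun h => hB h.2.2)]
        simp
    · have hterm : ∀ r ∈ Finset.univ.filter fun r : R => φ (Sum.inr r) = s,
          (if decReach T v (Sum.inr r) then projMeas φ Sε r else 0) = 0 := by
        intro r hr
        rw [Finset.mem_filter] at hr
        simp [projMeas, hr.2, hs]
      rw [Finset.sum_congr rfl hterm, Finset.sum_const_zero, if_neg (fun h => hs h.1)]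
  calc (∑ r : R, if decReach T v (Sum.inr r) then projMeas φ Sε r else 0)
      = ∑ s : S, ∑ r ∈ Finset.univ.filter fun r : R => φ (Sum.inr r) = s,
          if decReach T v (Sum.inr r) then projMeas φ Sε r else 0 :=
        (Finset.sum_fiberwise _ _ _).symm
    _ = ∑ s : S, (if s ∈ Sε ∧ (∃ l : L, decReach T v (Sum.inl l) ∧ φ (Sum.inl l) = s) ∧
            (∃ r : R, decReach T v (Sum.inr r) ∧ φ (Sum.inr r) = s) then
          ptil φ s else 0) := Finset.sum_congr rfl fun s _ => key s
    _ = ∑ s ∈ Sε,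
        (if (∃ l : L, decReach T v (Sum.inl l) ∧ φ (Sum.inl l) = s) ∧
            (∃ r : R, decReach T v (Sum.inr r) ∧ φ (Sum.inr r) = s) then
          ptil φ s else 0) := by
        rw [Finset.sum_congr rfl fun s _ => ite_and _ _ _ _, Finset.sum_ite_mem,
          Finset.univ_inter]
end

section
/- Exact defect identity for projected measures over connected components: Let L and R be disjoint finite sets with L nonempty, let S be a finite set, let φ : L ∪ R → S, and let T assign to each l ∈ L a subset T(l) ⊆ R satisfying validity: for every l ∈ L, every r ∈ R with φ(r) = φ(l) belongs to T(l). Let G be the bipartite graph on L ∪ R with an edge between l ∈ L and r ∈ R iff r ∈ T(l). Let S_ε ⊆ S be a set of labels such that every s ∈ S_ε is the label of at least one element of R. For a label s and a finite set W write n_s[W] := |{w ∈ W : φ(w) = s}|, and define p̃(s) := n_s[L]/|L| and, for r ∈ R, proj(p̃)(r) := p̃(φ(r))·1{φ(r) ∈ S_ε}/n_{φ(r)}[R]. Then, summing over the connected components C of G (with C_L := C ∩ L and C_R := C ∩ R): Σ_C (|C_L|/|L| − Σ_{r∈C_R} proj(p̃)(r)) = |{l ∈ L : φ(l) ∉ S_ε}|/|L|.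 In particular, each summand is nonnegative, and if at most a 2ε-fraction of the elements of L carry labels outside S_ε, then the total sum lies in [0, 2ε]. -/
open Finset
open scoped Classical

/-- The set of connected components of the decoder graph, each represented as the
finset of vertices reachable from some vertex. -/
noncomputable def decComps {L R : Type} [Fintype L] [Fintype R]
    (T : L → Finset R) : Finset (Finset (L ⊕ R)) :=
  Finset.image (fun v : L ⊕ R => Finset.univ.filter fun w => decReach T v w)
    Finset.univ

/-- `|C_L|/|L|`: the fraction of left vertices lying in the component `C`. -/
noncomputable def leftFrac {L R : Type} [Fintype L] [Fintype R]
    (C : Finset (L ⊕ R)) : ℝ :=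
  ((Finset.univ.filter fun l : L => Sum.inl l ∈ C).card : ℝ) / (Fintype.card L : ℝ)

/-- `Σ_{r ∈ C_R} proj(p̃)(r)`: projected mass of the right part of component `C`. -/
noncomputable def projMass {L R S : Type} [Fintype L] [Fintype R]
    (φ : L ⊕ R → S) (Sε : Finset S) (C : Finset (L ⊕ R)) : ℝ :=
  ∑ r : R, if Sum.inr r ∈ C then projMeas φ Sε r else 0

section Helpers

variable {L R : Type} (T : L → Finset R)

lemma decAdj_symm : ∀ {v w : L ⊕ R}, decAdj T v w → decAdj T w v := by
  intro v w h
  cases v <;> cases w <;> simpa [decAdj] using h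

lemma decReach_symm {v w : L ⊕ R} (h : decReach T v w) : decReach T w v :=
  (@Relation.ReflTransGen.stdSymm _ _ ⟨fun _ _ => decAdj_symm T⟩).symm _ _ h

variable [Fintype L] [Fintype R]

/-- The connected component of a vertex. -/
noncomputable def decComp (v : L ⊕ R) : Finset (L ⊕ R) :=
  Finset.univ.filter fun w => decReach T v w

lemma mem_decComp {v w : L ⊕ R} : w ∈ decComp T v ↔ decReach T v w := by
  simp [decComp]

lemma decComp_eq_of_reach {v w : L ⊕ R} (h : decReach T v w) :
    decComp T v = decComp T w := by
  ext u
  simp only [mem_decComp]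
  exact ⟨fun h' => Relation.ReflTransGen.trans (decReach_symm T h) h',
    fun h' => Relation.ReflTransGen.trans h h'⟩

lemma decComp_mem_decComps (v : L ⊕ R) : decComp T v ∈ decComps T :=
  Finset.mem_image_of_mem _ (Finset.mem_univ v)

lemma decComps_eq {C : Finset (L ⊕ R)} (hC : C ∈ decComps T) :
    ∃ v, C = decComp T v := by
  rcases Finset.mem_image.1 hC with ⟨v, _, hv⟩
  exact ⟨v, hv.symm⟩

lemma self_mem_decComp (v : L ⊕ R) : v ∈ decComp T v :=
  (mem_decComp T).2 Relation.ReflTransGen.refl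

lemma decComp_unique {C : Finset (L ⊕ R)} (hC : C ∈ decComps T)
    {u : L ⊕ R} (hu : u ∈ C) : C = decComp T u := by
  obtain ⟨v, rfl⟩ := decComps_eq T hC
  exact decComp_eq_of_reach T ((mem_decComp T).1 hu)

lemma mem_of_adj_of_mem {C : Finset (L ⊕ R)} (hC : C ∈ decComps T)
    {v w : L ⊕ R} (hv : v ∈ C) (h : decAdj T v w) : w ∈ C := by
  rw [decComp_unique T hC hv]
  exact (mem_decComp T).2 (Relation.ReflTransGen.single h)

lemma sum_decComps_point (u : L ⊕ R) (a : ℝ) :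
    ∑ C ∈ decComps T, (if u ∈ C then a else 0) = a := by
  rw [Finset.sum_eq_single_of_mem (decComp T u) (decComp_mem_decComps T u)]
  · simp [self_mem_decComp]
  · intro C hC hne
    have hu : u ∉ C := fun hu => hne (decComp_unique T hC hu)
    simp [hu]

end Helpers

/-- Exact defect identity for projected measures over connected
components: under validity of the decoding function `T` and representation of every
`s ∈ S_ε` among the right vertices, the per-component defects `|C_L|/|L| − proj(C_R)`
are nonnegative and sum to the fraction of left vertices with labels outside `S_ε`;
in particular if that fraction is at most `2ε` the total defect lies in `[0, 2ε]`. -/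
theorem projected_defect_identity
    {L R S : Type} [Fintype L] [Fintype R] [Fintype S] [Nonempty L]
    (φ : L ⊕ R → S) (T : L → Finset R)
    (hvalid : ∀ (l : L) (r : R), φ (Sum.inr r) = φ (Sum.inl l) → r ∈ T l)
    (Sε : Finset S) (hSε : ∀ s ∈ Sε, ∃ r : R, φ (Sum.inr r) = s) :
    (∀ C ∈ decComps T, projMass φ Sε C ≤ leftFrac C) ∧
    ((∑ C ∈ decComps T, (leftFrac C - projMass φ Sε C)) =
      ((Finset.univ.filter fun l : L => φ (Sum.inl l) ∉ Sε).card : ℝ) /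
        (Fintype.card L : ℝ)) ∧
    (∀ ε : ℝ,
      ((Finset.univ.filter fun l : L => φ (Sum.inl l) ∉ Sε).card : ℝ) /
          (Fintype.card L : ℝ) ≤ 2 * ε →
      0 ≤ (∑ C ∈ decComps T, (leftFrac C - projMass φ Sε C)) ∧
        (∑ C ∈ decComps T, (leftFrac C - projMass φ Sε C)) ≤ 2 * ε) := by
  classical
  have hLpos : 0 < (Fintype.card L : ℝ) := by exact_mod_cast Fintype.card_pos
  -- Per-component inequality
  have hineq : ∀ C ∈ decComps T, projMass φ Sε C ≤ leftFrac C := by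
    intro C hC
    have hleft : leftFrac C = ∑ s : S,
        ((Finset.univ.filter fun l : L => Sum.inl l ∈ C ∧ φ (Sum.inl l) = s).card : ℝ)
          / (Fintype.card L : ℝ) := by
      have h1 : (Finset.univ.filter fun l : L => Sum.inl l ∈ C).card
          = ∑ s : S,
            ((Finset.univ.filter fun l : L => Sum.inl l ∈ C ∧ φ (Sum.inl l) = s).card) := by
        rw [Finset.card_eq_sum_card_fiberwise (f := fun l : L => φ (Sum.inl l))
          (t := Finset.univ) (fun x _ => Finset.mem_univ _)]
        exact Finset.sum_congr rfl fun s _ => by rw [Finset.filter_filter]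
      rw [leftFrac, h1]
      push_cast
      rw [Finset.sum_div]
    have hproj : projMass φ Sε C = ∑ s : S,
        ∑ r ∈ Finset.univ.filter fun r : R => φ (Sum.inr r) = s,
          (if Sum.inr r ∈ C then projMeas φ Sε r else 0) := by
      rw [projMass]
      exact (Finset.sum_fiberwise Finset.univ (fun r : R => φ (Sum.inr r)) _).symm
    rw [hleft, hproj]
    apply Finset.sum_le_sum
    intro s _
    by_cases hex : ∃ r : R, φ (Sum.inr r) = s ∧ Sum.inr r ∈ C
    · obtain ⟨r0, hr0s, hr0C⟩ := hex
      have hptil_nonneg : 0 ≤ ptil φ s := by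
        unfold ptil; positivity
      have hX : (0:ℝ) ≤ if s ∈ Sε then ptil φ s / (nRight φ s : ℝ) else 0 := by
        split_ifs
        · exact div_nonneg hptil_nonneg (Nat.cast_nonneg _)
        · exact le_refl _
      have hlmem : ∀ l : L, φ (Sum.inl l) = s → Sum.inl l ∈ C := by
        intro l hl
        apply mem_of_adj_of_mem T hC hr0C
        show decAdj T (Sum.inr r0) (Sum.inl l)
        show r0 ∈ T l
        exact hvalid l r0 (by rw [hr0s, hl])
      have hfilter : (Finset.univ.filter fun l : L =>
          Sum.inl l ∈ C ∧ φ (Sum.inl l) = s)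
          = (Finset.univ.filter fun l : L => φ (Sum.inl l) = s) := by
        apply Finset.filter_congr
        intro l _
        exact ⟨And.right, fun h => ⟨hlmem l h, h⟩⟩
      calc ∑ r ∈ Finset.univ.filter fun r : R => φ (Sum.inr r) = s,
            (if Sum.inr r ∈ C then projMeas φ Sε r else 0)
          ≤ ∑ _r ∈ Finset.univ.filter fun r : R => φ (Sum.inr r) = s,
            (if s ∈ Sε then ptil φ s / (nRight φ s : ℝ) else 0) := by
            apply Finset.sum_le_sum
            intro r hr
            rw [Finset.mem_filter] at hr
            by_cases h : Sum.inr r ∈ C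
            · simp [h, projMeas, hr.2]
            · simpa [h] using hX
        _ = (nRight φ s : ℝ) * (if s ∈ Sε then ptil φ s / (nRight φ s : ℝ) else 0) := by
            rw [Finset.sum_const, nsmul_eq_mul]
            rfl
        _ ≤ ((Finset.univ.filter fun l : L =>
              Sum.inl l ∈ C ∧ φ (Sum.inl l) = s).card : ℝ) / (Fintype.card L : ℝ) := by
            rw [hfilter]
            by_cases hs : s ∈ Sε
            · rw [if_pos hs]
              have hn : (nRight φ s : ℝ) ≠ 0 := by
                have : 0 < nRight φ s := Finset.card_pos.2 ⟨r0, by simp [hr0s]⟩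
                exact_mod_cast this.ne'
              rw [mul_comm, div_mul_cancel₀ _ hn]
              exact le_of_eq rfl
            · rw [if_neg hs, mul_zero]
              positivity
    · have hz : ∀ r ∈ Finset.univ.filter fun r : R => φ (Sum.inr r) = s,
          (if Sum.inr r ∈ C then projMeas φ Sε r else 0) = 0 := by
        intro r hr
        rw [Finset.mem_filter] at hr
        have : Sum.inr r ∉ C := fun h => hex ⟨r, hr.2, h⟩
        simp [this]
      rw [Finset.sum_eq_zero hz]
      positivity
  -- Total left mass is 1
  have hsum_left : ∑ C ∈ decComps T, leftFrac C = 1 := by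
    have hLF : ∀ C : Finset (L ⊕ R), leftFrac C =
        ∑ l : L, (if Sum.inl l ∈ C then (1 : ℝ) / (Fintype.card L : ℝ) else 0) := by
      intro C
      rw [leftFrac, Finset.card_filter]
      push_cast
      rw [Finset.sum_div]
      apply Finset.sum_congr rfl
      intro l _
      split_ifs <;> simp
    simp_rw [hLF]
    rw [Finset.sum_comm]
    have hpt : ∀ l : L, ∑ C ∈ decComps T,
        (if Sum.inl l ∈ C then (1:ℝ)/(Fintype.card L:ℝ) else 0)
          = 1/(Fintype.card L:ℝ) := fun l => sum_decComps_point T _ _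
    rw [Finset.sum_congr rfl fun l _ => hpt l, Finset.sum_const, nsmul_eq_mul,
      Finset.card_univ]
    field_simp
  -- Total projected mass
  have hsum_proj : ∑ C ∈ decComps T, projMass φ Sε C = ∑ r : R, projMeas φ Sε r := by
    unfold projMass
    rw [Finset.sum_comm]
    exact Finset.sum_congr rfl fun r _ => sum_decComps_point T _ _
  have hmeas : ∑ r : R, projMeas φ Sε r = ∑ s : S, (if s ∈ Sε then ptil φ s else 0) := by
    rw [← Finset.sum_fiberwise Finset.univ (fun r : R => φ (Sum.inr r)) (projMeas φ Sε)]
    apply Finset.sum_congr rfl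
    intro s _
    have hconst : ∀ r ∈ Finset.univ.filter (fun r : R => φ (Sum.inr r) = s),
        projMeas φ Sε r = (if s ∈ Sε then ptil φ s / (nRight φ s : ℝ) else 0) := by
      intro r hr
      rw [Finset.mem_filter] at hr
      simp [projMeas, hr.2]
    rw [Finset.sum_congr rfl hconst, Finset.sum_const, nsmul_eq_mul]
    have hcard : ((Finset.univ.filter fun r : R => φ (Sum.inr r) = s).card : ℝ)
        = (nRight φ s : ℝ) := rfl
    rw [hcard]
    by_cases hs : s ∈ Sε
    · rw [if_pos hs, if_pos hs]
      obtain ⟨r0, hr0⟩ := hSε s hs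
      have hn : (nRight φ s : ℝ) ≠ 0 := by
        have : 0 < nRight φ s := Finset.card_pos.2 ⟨r0, by simp [hr0]⟩
        exact_mod_cast this.ne'
      rw [mul_comm, div_mul_cancel₀ _ hn]
    · simp [hs]
  -- Total ptil mass is 1
  have hptil_total : ∑ s : S, ptil φ s = 1 := by
    have h1 : (Finset.univ : Finset L).card = ∑ s : S, nLeft φ s :=
      Finset.card_eq_sum_card_fiberwise (f := fun l : L => φ (Sum.inl l))
        (t := Finset.univ) (fun x _ => Finset.mem_univ _)
    have h2 : (∑ s : S, (nLeft φ s : ℝ)) = (Fintype.card L : ℝ) := by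
      rw [← Nat.cast_sum, ← h1, Finset.card_univ]
    unfold ptil
    rw [← Finset.sum_div, h2, div_self hLpos.ne']
  -- outside mass
  have hout : ((Finset.univ.filter fun l : L => φ (Sum.inl l) ∉ Sε).card : ℝ)
        / (Fintype.card L : ℝ)
      = ∑ s : S, (if s ∈ Sε then 0 else ptil φ s) := by
    have h1 : (Finset.univ.filter fun l : L => φ (Sum.inl l) ∉ Sε).card
        = ∑ s : S, ((Finset.univ.filter fun l : L => φ (Sum.inl l) ∉ Sε).filter
            fun l => φ (Sum.inl l) = s).card :=
      Finset.card_eq_sum_card_fiberwise (f := fun l : L => φ (Sum.inl l))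
        (t := Finset.univ) (fun x _ => Finset.mem_univ _)
    rw [h1]
    push_cast
    rw [Finset.sum_div]
    apply Finset.sum_congr rfl
    intro s _
    by_cases hs : s ∈ Sε
    · rw [if_pos hs]
      have he : ((Finset.univ.filter fun l : L => φ (Sum.inl l) ∉ Sε).filter
          fun l => φ (Sum.inl l) = s) = ∅ := by
        rw [Finset.filter_eq_empty_iff]
        intro l hl
        rw [Finset.mem_filter] at hl
        intro h
        exact hl.2 (by rw [h]; exact hs)
      rw [he]
      simp
    · rw [if_neg hs]
      have he : ((Finset.univ.filter fun l : L => φ (Sum.inl l) ∉ Sε).filter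
          fun l => φ (Sum.inl l) = s)
          = (Finset.univ.filter fun l : L => φ (Sum.inl l) = s) := by
        rw [Finset.filter_filter]
        apply Finset.filter_congr
        intro l _
        exact ⟨And.right, fun h => ⟨fun hc => hs (by rw [← h]; exact hc), h⟩⟩
      rw [he]
      rfl
  -- the identity
  have hiden : (∑ C ∈ decComps T, (leftFrac C - projMass φ Sε C)) =
      ((Finset.univ.filter fun l : L => φ (Sum.inl l) ∉ Sε).card : ℝ)
        / (Fintype.card L : ℝ) := by
    rw [Finset.sum_sub_distrib, hsum_left, hsum_proj, hmeas, hout, ← hptil_total,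
      ← Finset.sum_sub_distrib]
    apply Finset.sum_congr rfl
    intro s _
    by_cases hs : s ∈ Sε <;> simp [hs]
  refine ⟨hineq, hiden, fun ε hε => ?_⟩
  constructor
  · exact Finset.sum_nonneg fun C hC => sub_nonneg.2 (hineq C hC)
  · rw [hiden]; exact hε
end
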